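/- arXiv:1406.7413 — 4 statements merged into one kernel-verified Lean document; each statement's English description precedes it below -/
import Mathlib

section
/- Let CC be a C-system and let (B, B̃) satisfy the closure conditions (1)–(6). Define Mor(CC') inductively: f : Y → pt is in Mor(CC') iff Y ∈ B; f : Y → X with l(X) > 0 is in Mor(CC') iff X ∈ B, ft(f) ∈ Mor(CC') and s_f ∈ B̃. Then for every X ∈ B and every i ≥ 0 with l(X) ≥ i, the iterated projection p_{X,i} : X → ft^i(X) is in Mor(CC'). -/
universe u v

/-- A pre-category: sets of objects and morphisms with source, target, identity
and an (everywhere-defined but only meaningful on composable pairs) composition,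
written in diagrammatic order: `comp f g` is `f ∘ g` for `f : X → Y`, `g : Y → Z`. -/
structure PreCat (Ob : Type u) (Mor : Type v) where
  dom : Mor → Ob
  cod : Mor → Ob
  id : Ob → Mor
  comp : Mor → Mor → Mor
  id_dom : ∀ X, dom (id X) = X
  id_cod : ∀ X, cod (id X) = X
  dom_comp : ∀ f g, cod f = dom g → dom (comp f g) = dom f
  cod_comp : ∀ f g, cod f = dom g → cod (comp f g) = cod g
  id_comp : ∀ f, comp (id (dom f)) f = f
  comp_id : ∀ f, comp f (id (cod f)) = f
  comp_assoc : ∀ f g h, cod f = dom g → cod g = dom h →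
    comp (comp f g) h = comp f (comp g h)

/-- A C0-system (Definition 2014.07.06.def3). -/
structure C0 (Ob : Type u) (Mor : Type v) extends PreCat Ob Mor where
  l : Ob → ℕ
  pt : Ob
  ft : Ob → Ob
  p : Ob → Mor
  p_dom : ∀ X, dom (p X) = X
  p_cod : ∀ X, cod (p X) = ft X
  /-- `star X f` is `f*X`, meaningful for `0 < l X` and `cod f = ft X`. -/
  star : Ob → Mor → Ob
  /-- `q X f` is `q(f,X) : f*X → X`, meaningful for `0 < l X` and `cod f = ft X`. -/
  q : Ob → Mor → Mor
  l_pt : l pt = 0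
  eq_pt : ∀ X, l X = 0 → X = pt
  l_ft : ∀ X, 0 < l X → l (ft X) = l X - 1
  ft_pt : ft pt = pt
  pt_final : ∀ Y, ∃! f, dom f = Y ∧ cod f = pt
  l_star : ∀ X f, 0 < l X → cod f = ft X → 0 < l (star X f)
  ft_star : ∀ X f, 0 < l X → cod f = ft X → ft (star X f) = dom f
  q_dom : ∀ X f, 0 < l X → cod f = ft X → dom (q X f) = star X f
  q_cod : ∀ X f, 0 < l X → cod f = ft X → cod (q X f) = X
  square_comm : ∀ X f, 0 < l X → cod f = ft X →
    comp (p (star X f)) f = comp (q X f) (p X)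
  star_id : ∀ X, 0 < l X → star X (id (ft X)) = X
  q_id : ∀ X, 0 < l X → q X (id (ft X)) = id X
  star_comp : ∀ X f g, 0 < l X → cod f = ft X → cod g = dom f →
    star X (comp g f) = star (star X f) g
  q_comp : ∀ X f g, 0 < l X → cod f = ft X → cod g = dom f →
    q X (comp g f) = comp (q (star X f) g) (q X f)

/-- `ft(f) = f ∘ p_X` for `f : Y → X`. -/
def C0.ftMor {Ob : Type u} {Mor : Type v} (C : C0 Ob Mor) (f : Mor) : Mor :=
  C.comp f (C.p (C.cod f))

/-- The axioms of the operation `f ↦ s_f` of a C-system (Definition 2014.07.06.def1),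
for `f : Y → X` with `0 < l X`. -/
def C0.IsSOp {Ob : Type u} {Mor : Type v} (C : C0 Ob Mor) (s : Mor → Mor) : Prop :=
  (∀ f, 0 < C.l (C.cod f) → C.dom (s f) = C.dom f) ∧
  (∀ f, 0 < C.l (C.cod f) → C.cod (s f) = C.star (C.cod f) (C.ftMor f)) ∧
  (∀ f, 0 < C.l (C.cod f) →
    C.comp (s f) (C.p (C.star (C.cod f) (C.ftMor f))) = C.id (C.dom f)) ∧
  (∀ f, 0 < C.l (C.cod f) → C.comp (s f) (C.q (C.cod f) (C.ftMor f)) = f) ∧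
  (∀ f U g, 0 < C.l U → C.cod g = C.ft U → 0 < C.l (C.cod f) → C.cod f = C.star U g →
    s f = s (C.comp f (C.q U g)))

/-- A C-system: a C0-system together with an operation `f ↦ s_f` satisfying the axioms. -/
structure CSys (Ob : Type u) (Mor : Type v) extends C0 Ob Mor where
  sOp : Mor → Mor
  sOp_spec : C0.IsSOp toC0 sOp

def CSys.ftMor {Ob : Type u} {Mor : Type v} (C : CSys Ob Mor) (f : Mor) : Mor :=
  C.comp f (C.p (C.cod f))

/-- `Õb(CC)`: the set of sections `s : ft X → X` of the canonical projections `p_X`,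
for `l X > 0`. -/
def CSys.tOb {Ob : Type u} {Mor : Type v} (C : CSys Ob Mor) : Set Mor :=
  {s | 0 < C.l (C.cod s) ∧ C.dom s = C.ft (C.cod s) ∧
    C.comp s (C.p (C.cod s)) = C.id (C.ft (C.cod s))}

/-- Iterated canonical projection `p_{X,i} : X → ft^i X` (meaningful for `i ≤ l X`). -/
def CSys.pIter {Ob : Type u} {Mor : Type v} (C : CSys Ob Mor) (X : Ob) : ℕ → Mor
  | 0 => C.id X
  | i + 1 => C.comp (CSys.pIter C X i) (C.p (C.ft^[i] X))

/-- Iterated pull-back morphism `q(f,X,i) : f*(X,i) → X` for `f : Y → ft^i X`. -/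
def CSys.qIter {Ob : Type u} {Mor : Type v} (C : CSys Ob Mor) (f : Mor) : Ob → ℕ → Mor
  | _, 0 => f
  | X, i + 1 => C.q X (CSys.qIter C f (C.ft X) i)

/-- Iterated pull-back object `f*(X,i)` for `f : Y → ft^i X`. -/
def CSys.starIter {Ob : Type u} {Mor : Type v} (C : CSys Ob Mor) (f : Mor) : Ob → ℕ → Ob
  | _, 0 => C.dom f
  | X, i + 1 => C.star X (CSys.qIter C f (C.ft X) i)

/-- Pull-back `f*(r,i) : f*(ft X, i-1) → f*(X,i)` of a section `r : ft X → X` along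
`q(f, ft X, i-1)` (for `i ≥ 1`); it equals `s` applied to `q(f,ft X,i-1) ∘ r`. -/
def CSys.sectStar {Ob : Type u} {Mor : Type v} (C : CSys Ob Mor)
    (f : Mor) (X : Ob) (r : Mor) (i : ℕ) : Mor :=
  C.sOp (C.comp (C.qIter f (C.ft X) (i - 1)) r)

/-- The diagonal `δ(X) = s_{Id_X} : X → p_X^*(X)`. -/
def CSys.delta {Ob : Type u} {Mor : Type v} (C : CSys Ob Mor) (X : Ob) : Mor :=
  C.sOp (C.id X)

/-- A C-subsystem: a sub-pre-category closed under the operations defining the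
C-system structure. -/
structure Subsystem {Ob : Type u} {Mor : Type v} (C : CSys Ob Mor) where
  obs : Set Ob
  mors : Set Mor
  dom_mem : ∀ f ∈ mors, C.dom f ∈ obs
  cod_mem : ∀ f ∈ mors, C.cod f ∈ obs
  id_mem : ∀ X ∈ obs, C.id X ∈ mors
  comp_mem : ∀ f ∈ mors, ∀ g ∈ mors, C.cod f = C.dom g → C.comp f g ∈ mors
  pt_mem : C.pt ∈ obs
  ft_mem : ∀ X ∈ obs, C.ft X ∈ obs
  p_mem : ∀ X ∈ obs, C.p X ∈ mors
  star_mem : ∀ X ∈ obs, ∀ f ∈ mors, 0 < C.l X → C.cod f = C.ft X → C.star X f ∈ obs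
  q_mem : ∀ X ∈ obs, ∀ f ∈ mors, 0 < C.l X → C.cod f = C.ft X → C.q X f ∈ mors
  s_mem : ∀ f ∈ mors, 0 < C.l (C.cod f) → C.sOp f ∈ mors

/-- The closure conditions (1)-(6) of Proposition 2009.10.15.prop2 on a pair of subsets
`B ⊆ Ob(CC)`, `B̃ ⊆ Õb(CC)`. -/
def CSys.Closed {Ob : Type u} {Mor : Type v} (C : CSys Ob Mor)
    (B : Set Ob) (Bt : Set Mor) : Prop :=
  C.pt ∈ B ∧
  (∀ X ∈ B, C.ft X ∈ B) ∧
  (∀ s ∈ Bt, C.cod s ∈ B) ∧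
  (∀ Y ∈ B, ∀ r ∈ Bt, 0 < C.l Y → ∀ i : ℕ, 1 ≤ i → i ≤ C.l (C.cod r) →
    C.ft Y = C.ft^[i] (C.cod r) → C.sectStar (C.p Y) (C.cod r) r i ∈ Bt) ∧
  (∀ s ∈ Bt, ∀ r ∈ Bt, ∀ i : ℕ, 1 ≤ i →
    C.cod s = C.ft^[i] (C.cod r) → C.sectStar s (C.cod r) r i ∈ Bt) ∧
  (∀ X ∈ B, 0 < C.l X → C.delta X ∈ Bt)

/-- The inductively defined set of morphisms `Mor(CC')` determined by a pair `(B,B̃)`: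
`f : Y → pt` belongs iff `Y ∈ B`; `f : Y → X` with `l X > 0` belongs iff `X ∈ B`,
`ft(f)` belongs and `s_f ∈ B̃`. -/
inductive MorIn {Ob : Type u} {Mor : Type v} (C : CSys Ob Mor)
    (B : Set Ob) (Bt : Set Mor) : Mor → Prop
  | base (f : Mor) : C.cod f = C.pt → C.dom f ∈ B → MorIn C B Bt f
  | step (f : Mor) : 0 < C.l (C.cod f) → C.cod f ∈ B →
      MorIn C B Bt (C.ftMor f) → C.sOp f ∈ Bt → MorIn C B Bt f

/-- A regular congruence relation on a C-system (Definition 2014.07.04.def1). -/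
structure RegCong {Ob : Type u} {Mor : Type v} (C : CSys Ob Mor) where
  rOb : Ob → Ob → Prop
  rMor : Mor → Mor → Prop
  eqv_ob : Equivalence rOb
  eqv_mor : Equivalence rMor
  dom_compat : ∀ f g, rMor f g → rOb (C.dom f) (C.dom g)
  cod_compat : ∀ f g, rMor f g → rOb (C.cod f) (C.cod g)
  id_compat : ∀ X Y, rOb X Y → rMor (C.id X) (C.id Y)
  ft_compat : ∀ X Y, rOb X Y → rOb (C.ft X) (C.ft Y)
  p_compat : ∀ X Y, rOb X Y → rMor (C.p X) (C.p Y)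
  comp_compat : ∀ f f' g g', C.cod f = C.dom g → C.cod f' = C.dom g' →
    rMor f f' → rMor g g' → rMor (C.comp f g) (C.comp f' g')
  star_compat : ∀ X X' f f', 0 < C.l X → 0 < C.l X' →
    C.cod f = C.ft X → C.cod f' = C.ft X' →
    rOb X X' → rMor f f' → rOb (C.star X f) (C.star X' f')
  q_compat : ∀ X X' f f', 0 < C.l X → 0 < C.l X' →
    C.cod f = C.ft X → C.cod f' = C.ft X' →
    rOb X X' → rMor f f' → rMor (C.q X f) (C.q X' f')
  s_compat : ∀ f f', 0 < C.l (C.cod f) → 0 < C.l (C.cod f') →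
    rMor f f' → rMor (C.sOp f) (C.sOp f')
  l_compat : ∀ X Y, rOb X Y → C.l X = C.l Y
  ob_lift : ∀ X F, 0 < C.l X → rOb (C.ft X) F → ∃ XF, rOb X XF ∧ C.ft XF = F
  mor_lift : ∀ f X' Y', rOb X' (C.dom f) → rOb Y' (C.cod f) →
    ∃ f', C.dom f' = X' ∧ C.cod f' = Y' ∧ rMor f' f

/-- A homomorphism of C-systems, given by a pair of maps on objects and morphisms. -/
structure IsHom {Ob₁ : Type u} {Mor₁ : Type v} {Ob₂ : Type u} {Mor₂ : Type v}
    (C : CSys Ob₁ Mor₁) (D : CSys Ob₂ Mor₂) (F : Ob₁ → Ob₂) (G : Mor₁ → Mor₂) : Prop where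
  dom_map : ∀ f, D.dom (G f) = F (C.dom f)
  cod_map : ∀ f, D.cod (G f) = F (C.cod f)
  id_map : ∀ X, G (C.id X) = D.id (F X)
  comp_map : ∀ f g, C.cod f = C.dom g → G (C.comp f g) = D.comp (G f) (G g)
  l_map : ∀ X, D.l (F X) = C.l X
  pt_map : F C.pt = D.pt
  ft_map : ∀ X, F (C.ft X) = D.ft (F X)
  p_map : ∀ X, G (C.p X) = D.p (F X)
  star_map : ∀ X f, 0 < C.l X → C.cod f = C.ft X → F (C.star X f) = D.star (F X) (G f)
  q_map : ∀ X f, 0 < C.l X → C.cod f = C.ft X → G (C.q X f) = D.q (F X) (G f)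
  s_map : ∀ f, 0 < C.l (C.cod f) → G (C.sOp f) = D.sOp (G f)

/-- A pair of equivalence relations `(∼, ≃)` on `(Ob(CC), Õb(CC))` satisfying the
conditions (1)-(4) of Proposition 2014.07.08.prop1.  The relation `≃` is encoded as a
relation on morphisms supported on `Õb(CC)`. -/
structure TPair {Ob : Type u} {Mor : Type v} (C : CSys Ob Mor) where
  rOb : Ob → Ob → Prop
  rT : Mor → Mor → Prop
  eqv_ob : Equivalence rOb
  rT_supp : ∀ s r, rT s r → s ∈ C.tOb ∧ r ∈ C.tOb
  rT_refl : ∀ s ∈ C.tOb, rT s s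
  rT_symm : ∀ s r, rT s r → rT r s
  rT_trans : ∀ s r t, rT s r → rT r t → rT s t
  ft_compat : ∀ X Y, rOb X Y → rOb (C.ft X) (C.ft Y)
  bd_compat : ∀ s r, rT s r → rOb (C.cod s) (C.cod r)
  T_compat : ∀ Y Y' X X' (i : ℕ), 1 ≤ i → i ≤ C.l X → i ≤ C.l X' →
    0 < C.l Y → 0 < C.l Y' → C.ft Y = C.ft^[i] X → C.ft Y' = C.ft^[i] X' →
    rOb Y Y' → rOb X X' →
    rOb (C.starIter (C.p Y) X i) (C.starIter (C.p Y') X' i)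
  Tt_compat : ∀ Y Y' r r' (i : ℕ), 1 ≤ i → i ≤ C.l (C.cod r) → i ≤ C.l (C.cod r') →
    0 < C.l Y → 0 < C.l Y' → C.ft Y = C.ft^[i] (C.cod r) → C.ft Y' = C.ft^[i] (C.cod r') →
    rOb Y Y' → rT r r' →
    rT (C.sectStar (C.p Y) (C.cod r) r i) (C.sectStar (C.p Y') (C.cod r') r' i)
  S_compat : ∀ s s' X X' (i : ℕ), 1 ≤ i → s ∈ C.tOb → s' ∈ C.tOb →
    C.cod s = C.ft^[i] X → C.cod s' = C.ft^[i] X' → rT s s' → rOb X X' →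
    rOb (C.starIter s X i) (C.starIter s' X' i)
  St_compat : ∀ s s' r r' (i : ℕ), 1 ≤ i →
    C.cod s = C.ft^[i] (C.cod r) → C.cod s' = C.ft^[i] (C.cod r') →
    rT s s' → rT r r' →
    rT (C.sectStar s (C.cod r) r i) (C.sectStar s' (C.cod r') r' i)
  delta_compat : ∀ X X', 0 < C.l X → 0 < C.l X' → rOb X X' →
    rT (C.delta X) (C.delta X')
  l_compat : ∀ X Y, rOb X Y → C.l X = C.l Y
  ob_lift : ∀ X F, 0 < C.l X → rOb (C.ft X) F → ∃ XF, rOb X XF ∧ C.ft XF = F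
  sec_lift : ∀ s X', s ∈ C.tOb → rOb X' (C.cod s) →
    ∃ s', s' ∈ C.tOb ∧ C.cod s' = X' ∧ rT s' s

/-- The relation `∼_Mor` on morphisms with codomain of length `m`, defined by induction
on `m` from a pair `(∼, ≃)`:  for `m = 0`, `(X₁ → pt) ∼ (X₂ → pt)` iff `X₁ ∼ X₂`;
for `m+1`, `f₁ ∼ f₂` iff `ft(f₁) ∼ ft(f₂)` and `s_{f₁} ≃ s_{f₂}`. -/
def CSys.relMorN {Ob : Type u} {Mor : Type v} (C : CSys Ob Mor) (P : TPair C) :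
    ℕ → Mor → Mor → Prop
  | 0, f₁, f₂ => C.cod f₁ = C.pt ∧ C.cod f₂ = C.pt ∧ P.rOb (C.dom f₁) (C.dom f₂)
  | m + 1, f₁, f₂ => C.l (C.cod f₁) = m + 1 ∧ C.l (C.cod f₂) = m + 1 ∧
      CSys.relMorN C P m (C.ftMor f₁) (C.ftMor f₂) ∧ P.rT (C.sOp f₁) (C.sOp f₂)

def CSys.relMor {Ob : Type u} {Mor : Type v} (C : CSys Ob Mor) (P : TPair C)
    (f₁ f₂ : Mor) : Prop :=
  CSys.relMorN C P (C.l (C.cod f₁)) f₁ f₂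

section Aux

variable {Ob : Type u} {Mor : Type v} (C : CSys Ob Mor)

lemma CSys.pIter_cod (X : Ob) : ∀ i, C.cod (C.pIter X i) = C.ft^[i] X := by
  intro i
  induction i with
  | zero => simpa [CSys.pIter] using C.id_cod X
  | succ i ih =>
    rw [Function.iterate_succ_apply']
    show C.cod (C.comp (C.pIter X i) (C.p (C.ft^[i] X))) = _
    rw [C.cod_comp _ _ (by rw [ih, C.p_dom]), C.p_cod]

lemma CSys.pIter_dom (X : Ob) : ∀ i, C.dom (C.pIter X i) = X := by
  intro i
  induction i with
  | zero => simpa [CSys.pIter] using C.id_dom X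
  | succ i ih =>
    show C.dom (C.comp (C.pIter X i) (C.p (C.ft^[i] X))) = _
    rw [C.dom_comp _ _ (by rw [C.pIter_cod, C.p_dom]), ih]

lemma CSys.l_ftIter (X : Ob) : ∀ i, i ≤ C.l X → C.l (C.ft^[i] X) = C.l X - i := by
  intro i
  induction i with
  | zero => simp
  | succ i ih =>
    intro hi
    have hi' : i ≤ C.l X := Nat.le_of_succ_le hi
    have hpos : 0 < C.l (C.ft^[i] X) := by rw [ih hi']; omega
    rw [Function.iterate_succ_apply', C.l_ft _ hpos, ih hi']
    omega

lemma CSys.ftIter_mem {B : Set Ob} {Bt : Set Mor} (h : C.Closed B Bt)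
    {X : Ob} (hX : X ∈ B) : ∀ i, C.ft^[i] X ∈ B := by
  intro i
  induction i with
  | zero => simpa using hX
  | succ i ih =>
    rw [Function.iterate_succ_apply']
    exact h.2.1 _ ih

lemma CSys.pIter_shift (X : Ob) :
    ∀ i, C.pIter X (i + 1) = C.comp (C.p X) (C.pIter (C.ft X) i) := by
  intro i
  induction i with
  | zero =>
    show C.comp (C.pIter X 0) (C.p (C.ft^[0] X)) = C.comp (C.p X) (C.id (C.ft X))
    show C.comp (C.id X) (C.p X) = C.comp (C.p X) (C.id (C.ft X))
    have l1 : C.comp (C.id X) (C.p X) = C.p X := by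
      have := C.id_comp (C.p X); rwa [C.p_dom] at this
    have l2 : C.comp (C.p X) (C.id (C.ft X)) = C.p X := by
      have := C.comp_id (C.p X); rwa [C.p_cod] at this
    rw [l1, l2]
  | succ i ih =>
    show C.comp (C.pIter X (i + 1)) (C.p (C.ft^[i+1] X)) = _
    rw [ih, Function.iterate_succ_apply,
      C.comp_assoc _ _ _ (by rw [C.p_cod, C.pIter_dom])
        (by rw [C.pIter_cod, C.p_dom])]
    rfl

lemma CSys.sOp_pIter_mem {B : Set Ob} {Bt : Set Mor} (h : C.Closed B Bt) :
    ∀ i X, X ∈ B → i ≤ C.l X → 0 < C.l (C.ft^[i] X) → C.sOp (C.pIter X i) ∈ Bt := by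
  intro i
  induction i with
  | zero =>
    intro X hX _ hpos
    simp only [Function.iterate_zero, id_eq] at hpos
    exact h.2.2.2.2.2 X hX hpos
  | succ i ih =>
    intro X hX hi hpos
    have hlX : 0 < C.l X := lt_of_lt_of_le (Nat.succ_pos i) hi
    have hX'B : C.ft X ∈ B := h.2.1 X hX
    have hlX' : i ≤ C.l (C.ft X) := by
      have := C.l_ft X hlX; omega
    have hiter : C.ft^[i+1] X = C.ft^[i] (C.ft X) := Function.iterate_succ_apply C.ft i X
    have hposf : 0 < C.l (C.ft^[i] (C.ft X)) := hiter ▸ hpos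
    -- the section r = s_{p_{ft X, i}} ∈ B̃
    have hr : C.sOp (C.pIter (C.ft X) i) ∈ Bt := ih (C.ft X) hX'B hlX' hposf
    set f := C.pIter (C.ft X) i with hfdef
    set r := C.sOp f with hrdef
    have hcodf : C.cod f = C.ft^[i] (C.ft X) := C.pIter_cod (C.ft X) i
    have hdomf : C.dom f = C.ft X := C.pIter_dom (C.ft X) i
    have hposcodf : 0 < C.l (C.cod f) := by rw [hcodf]; exact hposf
    set U : Ob := C.ft^[i] (C.ft X) with hUdef
    set q1 := C.pIter (C.ft X) (i + 1) with hq1def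
    have hUpos : 0 < C.l U := hposf
    have hftMor : C.toC0.ftMor f = q1 := by
      show C.comp f (C.p (C.cod f)) = q1
      rw [hcodf]
      rfl
    have hcodq1 : C.cod q1 = C.ft U := by
      rw [hq1def, C.pIter_cod, Function.iterate_succ_apply']
    have hdomq1 : C.dom q1 = C.ft X := C.pIter_dom (C.ft X) (i + 1)
    have hcodr : C.cod r = C.star U q1 := by
      rw [hrdef, C.sOp_spec.2.1 f hposcodf, hftMor, hcodf]
    have hdomr : C.dom r = C.ft X := by
      rw [hrdef, C.sOp_spec.1 f hposcodf, hdomf]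
    -- the composition g = p_X ∘ r
    have hc1 : C.cod (C.p X) = C.dom r := by rw [C.p_cod, hdomr]
    have hcodg : C.cod (C.comp (C.p X) r) = C.star U q1 := by
      rw [C.cod_comp _ _ hc1, hcodr]
    have hposg : 0 < C.l (C.cod (C.comp (C.p X) r)) := by
      rw [hcodg]
      exact C.l_star U q1 hUpos hcodq1
    -- axiom 5
    have h5 := C.sOp_spec.2.2.2.2 (C.comp (C.p X) r) U q1 hUpos hcodq1 hposg hcodg
    -- axiom 4 for f
    have h4 := C.sOp_spec.2.2.2.1 f hposcodf
    rw [hcodf, hftMor] at h4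
    -- note C.q (C.ft^[i] (C.ft X)) q1 appears; hcodf rewrote cod f everywhere outside ftMor
    have hassoc : C.comp (C.comp (C.p X) r) (C.q U q1)
        = C.comp (C.p X) (C.comp r (C.q U q1)) := by
      refine C.comp_assoc _ _ _ hc1 ?_
      rw [hcodr, C.q_dom U q1 hUpos hcodq1]
    have key : C.sOp (C.comp (C.p X) r) = C.sOp (C.pIter X (i + 1)) := by
      rw [h5, hassoc, h4, C.pIter_shift X i]
    -- closure condition (4) with i = 1
    have h1le : 1 ≤ C.l (C.cod r) := by
      rw [hcodr]
      exact C.l_star U q1 hUpos hcodq1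
    have hft1 : C.ft X = C.ft^[1] (C.cod r) := by
      rw [Function.iterate_one, hcodr, C.ft_star U q1 hUpos hcodq1, hdomq1]
    have hmem := h.2.2.2.1 X hX r hr hlX 1 le_rfl h1le hft1
    have hsect : C.sectStar (C.p X) (C.cod r) r 1 = C.sOp (C.comp (C.p X) r) := rfl
    rw [hsect, key] at hmem
    exact hmem

end Aux

/-- Lemma 2009.10.16.l1: for `X ∈ B` and `i ≤ l X`, the iterated
projection `p_{X,i} : X → ft^i X` belongs to `Mor(CC')`. -/
theorem stmt8 {Ob : Type u} {Mor : Type v} (C : CSys Ob Mor)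
    (B : Set Ob) (Bt : Set Mor) (hBt : Bt ⊆ C.tOb) (h : C.Closed B Bt)
    (X : Ob) (hX : X ∈ B) (i : ℕ) (hi : i ≤ C.l X) :
    MorIn C B Bt (C.pIter X i) := by
  have main : ∀ j i, i ≤ C.l X → C.l X - i = j → MorIn C B Bt (C.pIter X i) := by
    intro j
    induction j with
    | zero =>
      intro i hi hj
      apply MorIn.base
      · rw [C.pIter_cod]
        exact C.eq_pt _ (by rw [C.l_ftIter X i hi]; omega)
      · rw [C.pIter_dom]; exact hX
    | succ j ihj =>
      intro i hi hj
      have hpos : 0 < C.l (C.ft^[i] X) := by rw [C.l_ftIter X i hi]; omega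
      apply MorIn.step
      · rw [C.pIter_cod]; exact hpos
      · rw [C.pIter_cod]; exact C.ftIter_mem h hX i
      · have hft : CSys.ftMor C (C.pIter X i) = C.pIter X (i + 1) := by
          show C.comp (C.pIter X i) (C.p (C.cod (C.pIter X i))) = _
          rw [C.pIter_cod]
          rfl
        rw [hft]
        exact ihj (i + 1) (by omega) (by omega)
      · exact C.sOp_pIter_mem h i X hX hi hpos
  exact main (C.l X - i) i hi rfl
end

section
/- Let CC be a C-system and let (B, B̃) satisfy the closure conditions (1)–(6), with Mor(CC') defined inductively as: f : Y → pt is in Mor(CC') iff Y ∈ B; f : Y → X with l(X) > 0 is in Mor(CC') iff X ∈ B, ft(f) ∈ Mor(CC') and s_f ∈ B̃. Then for every r : ft(X) → X in B̃, every i ≥ 1 with l(X) ≥ i, and every f : Y → ft^i(X) in Mor(CC'), the pull-back f*(r,i) : ft(f*(X,i)) → f*(X,i) is in B̃. -/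
universe u v

section StmtNineAux

variable {Ob : Type u} {Mor : Type v}

@[simp] lemma qIter_zero (C : CSys Ob Mor) (f : Mor) (X : Ob) : C.qIter f X 0 = f := rfl

@[simp] lemma qIter_succ (C : CSys Ob Mor) (f : Mor) (X : Ob) (i : ℕ) :
    C.qIter f X (i + 1) = C.q X (C.qIter f (C.ft X) i) := rfl

@[simp] lemma starIter_zero (C : CSys Ob Mor) (f : Mor) (X : Ob) :
    C.starIter f X 0 = C.dom f := rfl

@[simp] lemma starIter_succ (C : CSys Ob Mor) (f : Mor) (X : Ob) (i : ℕ) :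
    C.starIter f X (i + 1) = C.star X (C.qIter f (C.ft X) i) := rfl

lemma ftMor_eq (C : CSys Ob Mor) (f : Mor) : C0.ftMor C.toC0 f = C.ftMor f := rfl

lemma l_ft_iter (C : CSys Ob Mor) :
    ∀ (i : ℕ) (X : Ob), i ≤ C.l X → C.l (C.ft^[i] X) = C.l X - i
  | 0, X, _ => by simp
  | i + 1, X, h => by
    rw [Function.iterate_succ_apply']
    have h2 : C.l (C.ft^[i] X) = C.l X - i := l_ft_iter C i X (Nat.le_of_succ_le h)
    rw [C.l_ft _ (by omega), h2]
    omega

lemma iters (C : CSys Ob Mor) :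
    ∀ (i : ℕ) (X : Ob) (f : Mor), C.cod f = C.ft^[i] X → i ≤ C.l X →
    C.cod (C.qIter f X i) = X ∧ C.dom (C.qIter f X i) = C.starIter f X i ∧
    C.l (C.starIter f X i) = C.l (C.dom f) + i ∧
    C.ft^[i] (C.starIter f X i) = C.dom f
  | 0, X, f, hc, _ => ⟨by simpa using hc, rfl, rfl, rfl⟩
  | i + 1, X, f, hc, hle => by
    have h0 : 0 < C.l X := lt_of_lt_of_le (Nat.succ_pos i) hle
    have hlf : i ≤ C.l (C.ft X) := by rw [C.l_ft X h0]; omega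
    have hc' : C.cod f = C.ft^[i] (C.ft X) := by rw [hc, Function.iterate_succ_apply]
    obtain ⟨q1, q2, q3, q4⟩ := iters C i (C.ft X) f hc' hlf
    have hstar := C.ft_star X (C.qIter f (C.ft X) i) h0 q1
    refine ⟨?_, ?_, ?_, ?_⟩
    · rw [qIter_succ]; exact C.q_cod X _ h0 q1
    · rw [qIter_succ, starIter_succ]; exact C.q_dom X _ h0 q1
    · rw [starIter_succ]
      have hpos := C.l_star X _ h0 q1
      have hft := C.l_ft _ hpos
      rw [hstar, q2, q3] at hft
      omega
    · rw [starIter_succ, Function.iterate_succ_apply, hstar, q2]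
      exact q4

lemma qIter_id (C : CSys Ob Mor) :
    ∀ (i : ℕ) (X : Ob), i ≤ C.l X → C.qIter (C.id (C.ft^[i] X)) X i = C.id X
  | 0, X, _ => by simp
  | i + 1, X, h => by
    have h0 : 0 < C.l X := lt_of_lt_of_le (Nat.succ_pos i) h
    have hlf : i ≤ C.l (C.ft X) := by rw [C.l_ft X h0]; omega
    rw [qIter_succ, show C.ft^[i+1] X = C.ft^[i] (C.ft X) from Function.iterate_succ_apply ..,
      qIter_id C i (C.ft X) hlf]
    exact C.q_id X h0

lemma iter_comp (C : CSys Ob Mor) :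
    ∀ (i : ℕ) (X : Ob) (f g : Mor), C.cod f = C.ft^[i] X → i ≤ C.l X →
    C.cod g = C.dom f →
    C.qIter (C.comp g f) X i = C.comp (C.qIter g (C.starIter f X i) i) (C.qIter f X i) ∧
    C.starIter (C.comp g f) X i = C.starIter g (C.starIter f X i) i
  | 0, X, f, g, _, _, hg => by
    refine ⟨rfl, ?_⟩
    simp only [starIter_zero]
    exact C.dom_comp g f hg
  | i + 1, X, f, g, hc, hle, hg => by
    have h0 : 0 < C.l X := lt_of_lt_of_le (Nat.succ_pos i) hle
    have hlf : i ≤ C.l (C.ft X) := by rw [C.l_ft X h0]; omega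
    have hc' : C.cod f = C.ft^[i] (C.ft X) := by rw [hc, Function.iterate_succ_apply]
    obtain ⟨q1, q2, q3, q4⟩ := iters C i (C.ft X) f hc' hlf
    obtain ⟨ih1, _⟩ := iter_comp C i (C.ft X) f g hc' hlf hg
    have hcg : C.cod g = C.ft^[i] (C.starIter f (C.ft X) i) := by rw [hg, q4]
    have hlg : i ≤ C.l (C.starIter f (C.ft X) i) := by rw [q3]; omega
    obtain ⟨k1, k2, k3, k4⟩ := iters C i _ g hcg hlg
    have hftstar : C.ft (C.star X (C.qIter f (C.ft X) i)) = C.starIter f (C.ft X) i := by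
      rw [C.ft_star X _ h0 q1, q2]
    constructor
    · simp only [qIter_succ, starIter_succ]
      rw [ih1, hftstar, C.q_comp X _ _ h0 q1 (by rw [k1, q2])]
    · simp only [qIter_succ, starIter_succ]
      rw [ih1, hftstar, C.star_comp X _ _ h0 q1 (by rw [k1, q2])]

lemma shift (C : CSys Ob Mor) :
    ∀ (j : ℕ) (Z : Ob) (w : Mor), C.cod w = C.ft (C.ft^[j] Z) → j + 1 ≤ C.l Z →
    C.qIter (C.q (C.ft^[j] Z) w) Z j = C.qIter w Z (j + 1) ∧
    C.starIter (C.q (C.ft^[j] Z) w) Z j = C.starIter w Z (j + 1)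
  | 0, Z, w, hc, hl => by
    have h0 : 0 < C.l Z := hl
    have hc' : C.cod w = C.ft Z := by simpa using hc
    constructor
    · simp
    · simp only [starIter_zero, starIter_succ, qIter_zero, Function.iterate_zero_apply]
      exact C.q_dom Z w h0 hc'
  | j + 1, Z, w, hc, hl => by
    have h0 : 0 < C.l Z := by omega
    have hl' : j + 1 ≤ C.l (C.ft Z) := by rw [C.l_ft Z h0]; omega
    have hc' : C.cod w = C.ft (C.ft^[j] (C.ft Z)) := by
      rw [hc, ← Function.iterate_succ_apply]
    obtain ⟨ih1, _⟩ := shift C j (C.ft Z) w hc' hl'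
    have hrw : C.ft^[j+1] Z = C.ft^[j] (C.ft Z) := Function.iterate_succ_apply ..
    constructor
    · simp only [qIter_succ]
      rw [hrw, ih1]
      simp only [qIter_succ]
    · simp only [starIter_succ]
      rw [hrw, ih1]

lemma sOp_section (C : CSys Ob Mor) (r : Mor) (hr : r ∈ C.tOb) : C.sOp r = r := by
  obtain ⟨h0, hdom, hsec⟩ := hr
  obtain ⟨hsd, hsc, hss, hsq, hsi⟩ := C.sOp_spec
  have hft : C0.ftMor C.toC0 r = C.id (C.ft (C.cod r)) := hsec
  have h4 := hsq r h0
  rw [hft, C.q_id (C.cod r) h0] at h4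
  have hcod : C.cod (C.sOp r) = C.cod r := by
    rw [hsc r h0, hft, C.star_id (C.cod r) h0]
  calc C.sOp r = C.comp (C.sOp r) (C.id (C.cod (C.sOp r))) := (C.comp_id _).symm
    _ = C.comp (C.sOp r) (C.id (C.cod r)) := by rw [hcod]
    _ = r := h4

/-- Basic facts about `h = comp (qIter f (ft X) j) r` for a section `r` over `X`. -/
lemma sect_base (C : CSys Ob Mor) (r : Mor) (hr : r ∈ C.tOb) (j : ℕ) (f : Mor)
    (hi2 : j + 1 ≤ C.l (C.cod r)) (hcf : C.cod f = C.ft^[j+1] (C.cod r)) :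
    C.cod (C.comp (C.qIter f (C.ft (C.cod r)) j) r) = C.cod r ∧
    C.dom (C.comp (C.qIter f (C.ft (C.cod r)) j) r) = C.starIter f (C.ft (C.cod r)) j ∧
    C0.ftMor C.toC0 (C.comp (C.qIter f (C.ft (C.cod r)) j) r) = C.qIter f (C.ft (C.cod r)) j := by
  obtain ⟨h0, hdom, hsec⟩ := hr
  have h0X : 0 < C.l (C.cod r) := h0
  have hlf : j ≤ C.l (C.ft (C.cod r)) := by rw [C.l_ft _ h0X]; omega
  have hcf' : C.cod f = C.ft^[j] (C.ft (C.cod r)) := by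
    rw [hcf, Function.iterate_succ_apply]
  obtain ⟨b1, b2, _, _⟩ := iters C j (C.ft (C.cod r)) f hcf' hlf
  have hbd : C.cod (C.qIter f (C.ft (C.cod r)) j) = C.dom r := by rw [b1, hdom]
  have hch : C.cod (C.comp (C.qIter f (C.ft (C.cod r)) j) r) = C.cod r :=
    C.cod_comp _ r hbd
  have hdh : C.dom (C.comp (C.qIter f (C.ft (C.cod r)) j) r) = C.starIter f (C.ft (C.cod r)) j := by
    rw [C.dom_comp _ r hbd, b2]
  refine ⟨hch, hdh, ?_⟩
  have step1 : C0.ftMor C.toC0 (C.comp (C.qIter f (C.ft (C.cod r)) j) r) =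
      C.comp (C.comp (C.qIter f (C.ft (C.cod r)) j) r) (C.p (C.cod r)) := by
    show C.comp _ (C.p (C.cod (C.comp (C.qIter f (C.ft (C.cod r)) j) r))) = _
    rw [hch]
  rw [step1, C.comp_assoc _ r (C.p (C.cod r)) hbd (C.p_dom _).symm, hsec,
    show C.id (C.ft (C.cod r)) = C.id (C.cod (C.qIter f (C.ft (C.cod r)) j)) from by rw [b1],
    C.comp_id]

/-- Properties of the pulled-back section `f*(r,i)`. -/
lemma sect_props (C : CSys Ob Mor) (r : Mor) (hr : r ∈ C.tOb) (i : ℕ) (f : Mor)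
    (hi1 : 1 ≤ i) (hi2 : i ≤ C.l (C.cod r)) (hcf : C.cod f = C.ft^[i] (C.cod r)) :
    C.sectStar f (C.cod r) r i ∈ C.tOb ∧
    C.cod (C.sectStar f (C.cod r) r i) = C.starIter f (C.cod r) i := by
  obtain ⟨j, rfl⟩ : ∃ j, i = j + 1 := ⟨i - 1, (Nat.succ_pred_eq_of_pos hi1).symm⟩
  obtain ⟨h0, hdom, hsec⟩ := hr
  have h0X : 0 < C.l (C.cod r) := h0
  have hlf : j ≤ C.l (C.ft (C.cod r)) := by rw [C.l_ft _ h0X]; omega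
  have hcf' : C.cod f = C.ft^[j] (C.ft (C.cod r)) := by
    rw [hcf, Function.iterate_succ_apply]
  obtain ⟨b1, b2, _, _⟩ := iters C j (C.ft (C.cod r)) f hcf' hlf
  obtain ⟨hch, hdh, hfm⟩ := sect_base C r ⟨h0, hdom, hsec⟩ j f hi2 hcf
  obtain ⟨hsd, hsc, hss, hsq, hsi⟩ := C.sOp_spec
  set h := C.comp (C.qIter f (C.ft (C.cod r)) j) r with hh
  have h0' : 0 < C.l (C.cod h) := by rw [hch]; exact h0X
  have hcs : C.cod (C.sOp h) = C.star (C.cod r) (C.qIter f (C.ft (C.cod r)) j) := by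
    rw [hsc h h0', hfm, hch]
  have hds : C.dom (C.sOp h) = C.starIter f (C.ft (C.cod r)) j := by
    rw [hsd h h0', hdh]
  have hfts : C.ft (C.star (C.cod r) (C.qIter f (C.ft (C.cod r)) j)) =
      C.starIter f (C.ft (C.cod r)) j := by
    rw [C.ft_star _ _ h0X b1, b2]
  have hsec' : C.comp (C.sOp h) (C.p (C.cod (C.sOp h))) = C.id (C.ft (C.cod (C.sOp h))) := by
    have := hss h h0'
    rw [hfm, hch] at this
    rw [hcs, hfts, ← hdh]
    exact this
  constructor
  · simp only [CSys.sectStar, Nat.add_sub_cancel, ← hh]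
    exact ⟨by rw [hcs]; exact C.l_star _ _ h0X b1, by rw [hds, hcs, hfts], hsec'⟩
  · simp only [CSys.sectStar, Nat.add_sub_cancel, starIter_succ, ← hh]
    exact hcs

/-- Composition formula for pulled-back sections. -/
lemma sect_comp (C : CSys Ob Mor) (r : Mor) (hr : r ∈ C.tOb) (i : ℕ) (f g : Mor)
    (hi1 : 1 ≤ i) (hi2 : i ≤ C.l (C.cod r)) (hcf : C.cod f = C.ft^[i] (C.cod r))
    (hg : C.cod g = C.dom f) :
    C.sectStar (C.comp g f) (C.cod r) r i =
      C.sectStar g (C.starIter f (C.cod r) i) (C.sectStar f (C.cod r) r i) i := by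
  obtain ⟨j, rfl⟩ : ∃ j, i = j + 1 := ⟨i - 1, (Nat.succ_pred_eq_of_pos hi1).symm⟩
  obtain ⟨h0, hdom, hsec⟩ := hr
  have h0X : 0 < C.l (C.cod r) := h0
  have hlf : j ≤ C.l (C.ft (C.cod r)) := by rw [C.l_ft _ h0X]; omega
  have hcf' : C.cod f = C.ft^[j] (C.ft (C.cod r)) := by
    rw [hcf, Function.iterate_succ_apply]
  obtain ⟨b1, b2, b3, b4⟩ := iters C j (C.ft (C.cod r)) f hcf' hlf
  obtain ⟨hch, hdh, hfm⟩ := sect_base C r ⟨h0, hdom, hsec⟩ j f hi2 hcf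
  obtain ⟨hsd, hsc, hss, hsq, hsi⟩ := C.sOp_spec
  set b := C.qIter f (C.ft (C.cod r)) j with hb
  set h := C.comp b r with hh
  have h0' : 0 < C.l (C.cod h) := by rw [hch]; exact h0X
  -- the `k` morphism
  have hcg : C.cod g = C.ft^[j] (C.starIter f (C.ft (C.cod r)) j) := by rw [hg, b4]
  have hlg : j ≤ C.l (C.starIter f (C.ft (C.cod r)) j) := by rw [b3]; omega
  obtain ⟨k1, k2, k3, k4⟩ := iters C j _ g hcg hlg
  set k := C.qIter g (C.starIter f (C.ft (C.cod r)) j) j with hk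
  obtain ⟨ic1, _⟩ := iter_comp C j (C.ft (C.cod r)) f g hcf' hlf hg
  -- LHS = sOp (comp k h)
  have hbd : C.cod b = C.dom r := by rw [b1, hdom]
  have hkb : C.cod k = C.dom b := by rw [k1, b2]
  have lhs_eq : C.sectStar (C.comp g f) (C.cod r) r (j+1) = C.sOp (C.comp k h) := by
    simp only [CSys.sectStar, Nat.add_sub_cancel]
    rw [ic1, ← hk, ← hb, C.comp_assoc k b r hkb hbd]
  -- axiom 4 for h
  have h4 : C.comp (C.sOp h) (C.q (C.cod r) b) = h := by
    have := hsq h h0'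
    rwa [hfm, hch] at this
  have hds : C.dom (C.sOp h) = C.dom b := by rw [hsd h h0', hh, C.dom_comp b r hbd]
  have hcs : C.cod (C.sOp h) = C.star (C.cod r) b := by rw [hsc h h0', hfm, hch]
  have hqd : C.dom (C.q (C.cod r) b) = C.star (C.cod r) b := C.q_dom _ _ h0X b1
  have hks : C.cod k = C.dom (C.sOp h) := by rw [hds, hkb]
  have hcomp_ks_cod : C.cod (C.comp k (C.sOp h)) = C.star (C.cod r) b := by
    rw [C.cod_comp k _ hks, hcs]
  have main : C.sOp (C.comp k h) = C.sOp (C.comp k (C.sOp h)) := by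
    have step : C.comp k h = C.comp (C.comp k (C.sOp h)) (C.q (C.cod r) b) := by
      rw [C.comp_assoc k (C.sOp h) (C.q (C.cod r) b) hks (by rw [hcs, hqd]), h4]
    rw [step]
    exact (hsi (C.comp k (C.sOp h)) (C.cod r) b h0X b1
      (by rw [hcomp_ks_cod]; exact C.l_star _ _ h0X b1) hcomp_ks_cod).symm
  -- RHS
  have hfts : C.ft (C.star (C.cod r) b) = C.starIter f (C.ft (C.cod r)) j := by
    rw [C.ft_star _ _ h0X b1, b2]
  have rhs_eq : C.sectStar g (C.starIter f (C.cod r) (j+1)) (C.sectStar f (C.cod r) r (j+1)) (j+1)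
      = C.sOp (C.comp k (C.sOp h)) := by
    simp only [CSys.sectStar, Nat.add_sub_cancel, starIter_succ]
    rw [← hb, hfts, ← hk, ← hh]
  rw [lhs_eq, rhs_eq, main]

lemma ft_starIter (C : CSys Ob Mor) :
    ∀ (j : ℕ) (X : Ob) (w : Mor), C.cod w = C.ft (C.ft^[j] X) → j + 1 ≤ C.l X →
    C.ft^[j] (C.starIter w X (j+1)) = C.star (C.ft^[j] X) w
  | 0, X, w, hc, hl => by
    have hc' : C.cod w = C.ft X := by simpa using hc
    simp [Function.iterate_zero_apply]
  | j + 1, X, w, hc, hl => by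
    have h0 : 0 < C.l X := by omega
    have hl' : j + 1 ≤ C.l (C.ft X) := by rw [C.l_ft X h0]; omega
    have hc' : C.cod w = C.ft (C.ft^[j] (C.ft X)) := by
      rw [hc, ← Function.iterate_succ_apply]
    have hcq : C.cod w = C.ft^[j+1] (C.ft X) := by
      rw [hc', Function.iterate_succ_apply']
    obtain ⟨q1, q2, _, _⟩ := iters C (j+1) (C.ft X) w hcq hl'
    have hstep : C.ft (C.starIter w X (j+2)) = C.starIter w (C.ft X) (j+1) := by
      rw [starIter_succ, C.ft_star X _ h0 q1, q2]
    rw [show C.ft^[j+1] (C.starIter w X (j+2)) = C.ft^[j] (C.ft (C.starIter w X (j+2)))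
        from Function.iterate_succ_apply .., hstep,
      ft_starIter C j (C.ft X) w hc' hl',
      show C.ft^[j] (C.ft X) = C.ft^[j+1] X from (Function.iterate_succ_apply ..).symm]

/-- Auxiliary base case: morphisms into `pt`, by induction on the length of the domain. -/
lemma base_case (C : CSys Ob Mor) (B : Set Ob) (Bt : Set Mor)
    (hBt : Bt ⊆ C.tOb) (h : C.Closed B Bt)
    (r : Mor) (hr : r ∈ Bt) (i : ℕ) (hi1 : 1 ≤ i) (hi2 : i ≤ C.l (C.cod r))
    (hpt : C.pt = C.ft^[i] (C.cod r)) :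
    ∀ (n : ℕ) (g : Mor), C.l (C.dom g) = n → C.cod g = C.pt → C.dom g ∈ B →
      C.sectStar g (C.cod r) r i ∈ Bt := by
  obtain ⟨hB1, hB2, hB3, hB4, hB5, hB6⟩ := h
  obtain ⟨hr0, hrdom, hrsec⟩ := hBt hr
  intro n
  induction n with
  | zero =>
    intro g hn hc _
    have hdg : C.dom g = C.pt := C.eq_pt _ hn
    have hid : g = C.id C.pt := by
      obtain ⟨u, _, huniq⟩ := C.pt_final C.pt
      rw [huniq g ⟨hdg, hc⟩, huniq (C.id C.pt) ⟨C.id_dom _, C.id_cod _⟩]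
    obtain ⟨j, rfl⟩ : ∃ j, i = j + 1 := ⟨i - 1, (Nat.succ_pred_eq_of_pos hi1).symm⟩
    have hj : j ≤ C.l (C.ft (C.cod r)) := by rw [C.l_ft _ hr0]; omega
    simp only [CSys.sectStar, Nat.add_sub_cancel]
    rw [hid, hpt, Function.iterate_succ_apply, qIter_id C j (C.ft (C.cod r)) hj,
      ← hrdom, C.id_comp r, sOp_section C r (hBt hr)]
    exact hr
  | succ n ihn =>
    intro g hn hc hd
    have hY0 : 0 < C.l (C.dom g) := by omega
    obtain ⟨u, ⟨hu1, hu2⟩, _⟩ := C.pt_final (C.ft (C.dom g))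
    have hpu : C.cod (C.p (C.dom g)) = C.dom u := by rw [C.p_cod, hu1]
    have hcomp_dom : C.dom (C.comp (C.p (C.dom g)) u) = C.dom g := by
      rw [C.dom_comp _ _ hpu, C.p_dom]
    have hcomp_cod : C.cod (C.comp (C.p (C.dom g)) u) = C.pt := by
      rw [C.cod_comp _ _ hpu, hu2]
    obtain ⟨v, _, hvuniq⟩ := C.pt_final (C.dom g)
    have hg_eq : g = C.comp (C.p (C.dom g)) u :=
      (hvuniq g ⟨rfl, hc⟩).trans (hvuniq _ ⟨hcomp_dom, hcomp_cod⟩).symm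
    have hu_mem : C.sectStar u (C.cod r) r (i) ∈ Bt := by
      refine ihn u ?_ hu2 (by rw [hu1]; exact hB2 _ hd)
      rw [hu1, C.l_ft _ hY0, hn]
      omega
    have hcfu : C.cod u = C.ft^[i] (C.cod r) := by rw [hu2, hpt]
    obtain ⟨ht_tOb, ht_cod⟩ := sect_props C r (hBt hr) i u hi1 hi2 hcfu
    obtain ⟨u1, u2, u3, u4⟩ := iters C i (C.cod r) u hcfu hi2
    rw [hg_eq, sect_comp C r (hBt hr) i u (C.p (C.dom g)) hi1 hi2 hcfu hpu, ← ht_cod]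
    refine hB4 (C.dom g) hd _ hu_mem hY0 i hi1 ?_ ?_
    · rw [ht_cod, u3]; omega
    · rw [ht_cod, u4, hu1]

/-- The main induction over `MorIn`. -/
lemma main_aux (C : CSys Ob Mor) (B : Set Ob) (Bt : Set Mor)
    (hBt : Bt ⊆ C.tOb) (h : C.Closed B Bt) :
    ∀ f : Mor, MorIn C B Bt f → ∀ r ∈ Bt, ∀ i : ℕ, 1 ≤ i → i ≤ C.l (C.cod r) →
      C.cod f = C.ft^[i] (C.cod r) → C.sectStar f (C.cod r) r i ∈ Bt := by
  intro f hfM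
  induction hfM with
  | base g hgpt hgdom =>
    intro r hr i hi1 hi2 hf
    exact base_case C B Bt hBt h r hr i hi1 hi2 (by rw [← hf, hgpt]) (C.l (C.dom g)) g rfl
      hgpt hgdom
  | step g hgl hgB hgft hgs ih =>
    intro r hr i hi1 hi2 hf
    obtain ⟨hB1, hB2, hB3, hB4, hB5, hB6⟩ := h
    obtain ⟨hr0, hrdom, hrsec⟩ := hBt hr
    obtain ⟨hsd, hsc, hss, hsq, hsi⟩ := C.sOp_spec
    have hilt : i + 1 ≤ C.l (C.cod r) := by
      have hl := l_ft_iter C i (C.cod r) hi2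
      rw [← hf] at hl
      omega
    -- the morphism w = ft(g)
    have hwc : C.cod (C.ftMor g) = C.ft (C.cod g) := by
      show C.cod (C.comp g (C.p (C.cod g))) = _
      rw [C.cod_comp _ _ (C.p_dom _).symm, C.p_cod]
    have hwc' : C.cod (C.ftMor g) = C.ft^[i+1] (C.cod r) := by
      rw [hwc, hf]
      exact (Function.iterate_succ_apply' C.ft i (C.cod r)).symm
    have ht_mem : C.sectStar (C.ftMor g) (C.cod r) r (i+1) ∈ Bt :=
      ih r hr (i+1) (by omega) hilt hwc'
    -- decomposition g = sOp g ∘ q(cod g, ftMor g)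
    have hsq' : C.comp (C.sOp g) (C.q (C.cod g) (C.ftMor g)) = g := hsq g hgl
    have hsc' : C.cod (C.sOp g) = C.star (C.cod g) (C.ftMor g) := hsc g hgl
    have hQcod : C.cod (C.q (C.cod g) (C.ftMor g)) = C.ft^[i] (C.cod r) := by
      rw [C.q_cod _ _ hgl hwc, hf]
    have hQdom : C.cod (C.sOp g) = C.dom (C.q (C.cod g) (C.ftMor g)) := by
      rw [hsc', C.q_dom _ _ hgl hwc]
    -- shift lemmas
    have hgq : C.cod g = C.ft^[i] (C.cod r) := hf
    have hshift_star : C.starIter (C.q (C.cod g) (C.ftMor g)) (C.cod r) i =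
        C.starIter (C.ftMor g) (C.cod r) (i+1) := by
      have := (shift C i (C.cod r) (C.ftMor g) (by rw [← hf]; exact hwc) hilt).2
      rw [← hf] at this
      exact this
    have hshift_q : C.sectStar (C.q (C.cod g) (C.ftMor g)) (C.cod r) r i =
        C.sectStar (C.ftMor g) (C.cod r) r (i+1) := by
      obtain ⟨j, rfl⟩ : ∃ j, i = j + 1 := ⟨i - 1, (Nat.succ_pred_eq_of_pos hi1).symm⟩
      simp only [CSys.sectStar, Nat.add_sub_cancel]
      have hfj : C.ft^[j] (C.ft (C.cod r)) = C.cod g := by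
        rw [← Function.iterate_succ_apply, ← hf]
      have hsh := (shift C j (C.ft (C.cod r)) (C.ftMor g)
        (by rw [hfj]; exact hwc) (by rw [C.l_ft _ hr0]; omega)).1
      rw [hfj] at hsh
      rw [hsh]
    -- rewrite the goal
    have key : C.sectStar g (C.cod r) r i =
        C.sectStar (C.sOp g) (C.starIter (C.q (C.cod g) (C.ftMor g)) (C.cod r) i)
          (C.sectStar (C.q (C.cod g) (C.ftMor g)) (C.cod r) r i) i := by
      conv_lhs => rw [← hsq']
      exact sect_comp C r (hBt hr) i (C.q (C.cod g) (C.ftMor g)) (C.sOp g) hi1 hi2 hQcod hQdom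
    rw [key, hshift_star, hshift_q]
    obtain ⟨ht_tOb, ht_cod⟩ := sect_props C r (hBt hr) (i+1) (C.ftMor g)
      (by omega) hilt hwc'
    rw [← ht_cod]
    refine hB5 (C.sOp g) hgs _ ht_mem i hi1 ?_
    rw [ht_cod, ft_starIter C i (C.cod r) (C.ftMor g) (by rw [← hf]; exact hwc) hilt,
      ← hf, hsc']

end StmtNineAux

/-- Lemma 2009.10.16.l3: for `r ∈ B̃`, `i ≥ 1` with `l X ≥ i` and
`f : Y → ft^i X` in `Mor(CC')`, the pull-back `f*(r,i)` belongs to `B̃`. -/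
theorem stmt9 {Ob : Type u} {Mor : Type v} (C : CSys Ob Mor)
    (B : Set Ob) (Bt : Set Mor) (hBt : Bt ⊆ C.tOb) (h : C.Closed B Bt)
    (r : Mor) (hr : r ∈ Bt) (i : ℕ) (hi1 : 1 ≤ i) (hi2 : i ≤ C.l (C.cod r))
    (f : Mor) (hf : C.cod f = C.ft^[i] (C.cod r)) (hfM : MorIn C B Bt f) :
    C.sectStar f (C.cod r) r i ∈ Bt :=
  main_aux C B Bt hBt h f hfM r hr i hi1 hi2 hf
end

section
/- Let CC be a C-system and let (B, B̃) satisfy the closure conditions (1)–(6), with Mor(CC') defined inductively as: f : Y → pt is in Mor(CC') iff Y ∈ B; f : Y → X with l(X) > 0 is in Mor(CC') iff X ∈ B, ft(f) ∈ Mor(CC') and s_f ∈ B̃. Then Mor(CC') is closed under composition: if g : Z → Y and f : Y → X are in Mor(CC') then g ∘ f ∈ Mor(CC'). -/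
universe u v

section Aux

variable {O : Type u} {M : Type v} (C : CSys O M)

lemma aux_l_ft_iter : ∀ (k : ℕ) (Y : O), k ≤ C.l Y → C.l (C.ft^[k] Y) = C.l Y - k := by
  intro k
  induction k with
  | zero => intro Y _; simp
  | succ n ih =>
    intro Y hk
    rw [Function.iterate_succ_apply]
    have h0 : 0 < C.l Y := by omega
    have h1 := C.l_ft Y h0
    rw [ih (C.ft Y) (by omega)]
    omega

lemma aux_ftMor_dom (f : M) : C.dom (C.ftMor f) = C.dom f :=
  C.dom_comp f _ (by rw [C.p_dom])

lemma aux_ftMor_cod (f : M) : C.cod (C.ftMor f) = C.ft (C.cod f) := by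
  unfold CSys.ftMor
  rw [C.cod_comp f _ (by rw [C.p_dom]), C.p_cod]

lemma aux_sOp_dom (f : M) (h : 0 < C.l (C.cod f)) : C.dom (C.sOp f) = C.dom f :=
  C.sOp_spec.1 f h

lemma aux_sOp_cod (f : M) (h : 0 < C.l (C.cod f)) :
    C.cod (C.sOp f) = C.star (C.cod f) (C.ftMor f) :=
  C.sOp_spec.2.1 f h

lemma aux_sOp_sec (f : M) (h : 0 < C.l (C.cod f)) :
    C.comp (C.sOp f) (C.p (C.star (C.cod f) (C.ftMor f))) = C.id (C.dom f) :=
  C.sOp_spec.2.2.1 f h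

lemma aux_sOp_q (f : M) (h : 0 < C.l (C.cod f)) :
    C.comp (C.sOp f) (C.q (C.cod f) (C.ftMor f)) = f :=
  C.sOp_spec.2.2.2.1 f h

lemma aux_sOp_nat (f : M) (U : O) (g : M) (h1 : 0 < C.l U) (h2 : C.cod g = C.ft U)
    (h3 : 0 < C.l (C.cod f)) (h4 : C.cod f = C.star U g) :
    C.sOp f = C.sOp (C.comp f (C.q U g)) :=
  C.sOp_spec.2.2.2.2 f U g h1 h2 h3 h4

lemma aux_tOb_sOp (f : M) (h : 0 < C.l (C.cod f)) : C.sOp f ∈ C.tOb := by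
  have hc := aux_sOp_cod C f h
  have hd := aux_sOp_dom C f h
  have hcm : C.cod (C.ftMor f) = C.ft (C.cod f) := aux_ftMor_cod C f
  have hls : 0 < C.l (C.star (C.cod f) (C.ftMor f)) := C.l_star _ _ h hcm
  have hfs : C.ft (C.star (C.cod f) (C.ftMor f)) = C.dom (C.ftMor f) := C.ft_star _ _ h hcm
  refine ⟨by rw [hc]; exact hls, ?_, ?_⟩
  · rw [hc, hd, hfs, aux_ftMor_dom]
  · rw [hc, hfs, aux_ftMor_dom]
    exact aux_sOp_sec C f h

lemma aux_qIter_facts : ∀ (n : ℕ) (Y : O) (f : M), C.cod f = C.ft^[n] Y → n ≤ C.l Y →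
    C.cod (C.qIter f Y n) = Y ∧ C.dom (C.qIter f Y n) = C.starIter f Y n ∧
    C.ft^[n] (C.starIter f Y n) = C.dom f ∧
    C.l (C.starIter f Y n) = C.l (C.dom f) + n := by
  intro n
  induction n with
  | zero => intro Y f hc _; exact ⟨by show C.cod f = Y; simpa using hc, rfl, rfl, rfl⟩
  | succ n ih =>
    intro Y f hc hn
    have h0 : 0 < C.l Y := by omega
    have hlf := C.l_ft Y h0
    have hcf : C.cod f = C.ft^[n] (C.ft Y) := by
      rw [hc, Function.iterate_succ_apply]
    obtain ⟨ic, idm, ift, il⟩ := ih (C.ft Y) f hcf (by omega)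
    have hq : C.qIter f Y (n+1) = C.q Y (C.qIter f (C.ft Y) n) := rfl
    have hs : C.starIter f Y (n+1) = C.star Y (C.qIter f (C.ft Y) n) := rfl
    have hls : 0 < C.l (C.star Y (C.qIter f (C.ft Y) n)) := C.l_star _ _ h0 ic
    have hfs : C.ft (C.star Y (C.qIter f (C.ft Y) n)) = C.dom (C.qIter f (C.ft Y) n) :=
      C.ft_star _ _ h0 ic
    refine ⟨?_, ?_, ?_, ?_⟩
    · rw [hq]; exact C.q_cod Y _ h0 ic
    · rw [hq, hs]; exact C.q_dom Y _ h0 ic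
    · rw [hs, Function.iterate_succ_apply, hfs, idm]; exact ift
    · have h2 := C.l_ft _ hls
      rw [hfs, idm, il] at h2
      rw [hs]; omega

lemma aux_ft_starIter (n : ℕ) (Y : O) (f : M) (hc : C.cod f = C.ft^[n+1] Y)
    (hn : n+1 ≤ C.l Y) : C.ft (C.starIter f Y (n+1)) = C.starIter f (C.ft Y) n := by
  have h0 : 0 < C.l Y := by omega
  have hlf := C.l_ft Y h0
  have hcf : C.cod f = C.ft^[n] (C.ft Y) := by rw [hc, Function.iterate_succ_apply]
  obtain ⟨ic, idm, _, _⟩ := aux_qIter_facts C n (C.ft Y) f hcf (by omega)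
  show C.ft (C.star Y (C.qIter f (C.ft Y) n)) = _
  rw [C.ft_star _ _ h0 ic, idm]

lemma aux_qIter_comp : ∀ (n : ℕ) (Y : O) (b a : M), C.cod a = C.dom b →
    C.cod b = C.ft^[n] Y → n ≤ C.l Y →
    C.qIter (C.comp a b) Y n = C.comp (C.qIter a (C.starIter b Y n) n) (C.qIter b Y n) := by
  intro n
  induction n with
  | zero => intro Y b a _ _ _; rfl
  | succ n ih =>
    intro Y b a hab hcb hn
    have h0 : 0 < C.l Y := by omega
    have hlf := C.l_ft Y h0
    have hcb' : C.cod b = C.ft^[n] (C.ft Y) := by rw [hcb, Function.iterate_succ_apply]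
    obtain ⟨icb, idb, iftb, ilb⟩ := aux_qIter_facts C n (C.ft Y) b hcb' (by omega)
    have hca' : C.cod a = C.ft^[n] (C.starIter b (C.ft Y) n) := by rw [hab, iftb]
    have hnZ : n ≤ C.l (C.starIter b (C.ft Y) n) := by rw [ilb]; omega
    obtain ⟨ica, ida, ifta, ila⟩ := aux_qIter_facts C n (C.starIter b (C.ft Y) n) a hca' hnZ
    have e1 : C.qIter (C.comp a b) Y (n+1) = C.q Y (C.qIter (C.comp a b) (C.ft Y) n) := rfl
    rw [e1, ih (C.ft Y) b a hab hcb' (by omega)]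
    rw [C.q_comp Y (C.qIter b (C.ft Y) n) (C.qIter a (C.starIter b (C.ft Y) n) n) h0 icb
      (by rw [ica, idb])]
    show _ = C.comp (C.q (C.star Y (C.qIter b (C.ft Y) n))
        (C.qIter a (C.ft (C.star Y (C.qIter b (C.ft Y) n))) n)) (C.q Y (C.qIter b (C.ft Y) n))
    rw [C.ft_star _ _ h0 icb, idb]

lemma aux_qIter_peel : ∀ (m : ℕ) (Y : O) (f : M), C.cod f = C.ft^[m+1] Y → m+1 ≤ C.l Y →
    C.qIter f Y (m+1) = C.qIter (C.q (C.ft^[m] Y) f) Y m := by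
  intro m
  induction m with
  | zero => intro Y f _ _; rfl
  | succ m ih =>
    intro Y f hc hm
    have h0 : 0 < C.l Y := by omega
    have hlf := C.l_ft Y h0
    have hc' : C.cod f = C.ft^[m+1] (C.ft Y) := by rw [hc, Function.iterate_succ_apply]
    show C.q Y (C.qIter f (C.ft Y) (m+1)) = C.q Y (C.qIter (C.q (C.ft^[m+1] Y) f) (C.ft Y) m)
    rw [ih (C.ft Y) f hc' (by omega), Function.iterate_succ_apply]

lemma aux_qIter_id : ∀ (n : ℕ) (Y : O), n ≤ C.l Y →
    C.qIter (C.id (C.ft^[n] Y)) Y n = C.id Y := by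
  intro n
  induction n with
  | zero => intro Y _; rfl
  | succ n ih =>
    intro Y hn
    have h0 : 0 < C.l Y := by omega
    have hlf := C.l_ft Y h0
    show C.q Y (C.qIter (C.id (C.ft^[n+1] Y)) (C.ft Y) n) = C.id Y
    rw [Function.iterate_succ_apply, ih (C.ft Y) (by omega)]
    exact C.q_id Y h0

lemma aux_sOp_comp (g f : M) (hgf : C.cod g = C.dom f) (hlf : 0 < C.l (C.cod f)) :
    C.sOp (C.comp g f) = C.sOp (C.comp g (C.sOp f)) := by
  have hcm : C.cod (C.ftMor f) = C.ft (C.cod f) := aux_ftMor_cod C f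
  have hds : C.dom (C.sOp f) = C.dom f := aux_sOp_dom C f hlf
  have hcs : C.cod (C.sOp f) = C.star (C.cod f) (C.ftMor f) := aux_sOp_cod C f hlf
  have hqd : C.dom (C.q (C.cod f) (C.ftMor f)) = C.star (C.cod f) (C.ftMor f) :=
    C.q_dom _ _ hlf hcm
  have hgs : C.cod g = C.dom (C.sOp f) := by rw [hds, hgf]
  have hcc : C.cod (C.comp g (C.sOp f)) = C.star (C.cod f) (C.ftMor f) := by
    rw [C.cod_comp g _ hgs, hcs]
  have hls : 0 < C.l (C.star (C.cod f) (C.ftMor f)) := C.l_star _ _ hlf hcm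
  have e := aux_sOp_nat C (C.comp g (C.sOp f)) (C.cod f) (C.ftMor f) hlf hcm
    (by rw [hcc]; exact hls) hcc
  rw [e, C.comp_assoc g (C.sOp f) (C.q (C.cod f) (C.ftMor f)) hgs (by rw [hcs, hqd]),
    aux_sOp_q C f hlf]

lemma aux_sectStar_eq (b r : M) (m : ℕ) :
    C.sectStar b (C.cod r) r (m+1) = C.sOp (C.comp (C.qIter b (C.ft (C.cod r)) m) r) := by
  simp [CSys.sectStar]

lemma aux_sectStar_facts (b r : M) (m : ℕ) (hr : r ∈ C.tOb)
    (hcb : C.cod b = C.ft^[m+1] (C.cod r)) (hml : m+1 ≤ C.l (C.cod r)) :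
    C.sectStar b (C.cod r) r (m+1) ∈ C.tOb ∧
    C.ft (C.cod (C.sectStar b (C.cod r) r (m+1))) = C.starIter b (C.ft (C.cod r)) m ∧
    C.ft^[m+1] (C.cod (C.sectStar b (C.cod r) r (m+1))) = C.dom b ∧
    C.l (C.cod (C.sectStar b (C.cod r) r (m+1))) = C.l (C.dom b) + (m+1) ∧
    C.dom (C.sectStar b (C.cod r) r (m+1)) = C.starIter b (C.ft (C.cod r)) m := by
  obtain ⟨hlr, hdr, hsr⟩ := hr
  have hlft := C.l_ft _ hlr
  have hcb' : C.cod b = C.ft^[m] (C.ft (C.cod r)) := by rw [hcb, Function.iterate_succ_apply]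
  obtain ⟨qc, qd, qft, ql⟩ := aux_qIter_facts C m (C.ft (C.cod r)) b hcb' (by omega)
  set w := C.comp (C.qIter b (C.ft (C.cod r)) m) r with hw
  have hcmp : C.cod (C.qIter b (C.ft (C.cod r)) m) = C.dom r := by rw [qc, hdr]
  have hcw : C.cod w = C.cod r := C.cod_comp _ _ hcmp
  have hdw : C.dom w = C.starIter b (C.ft (C.cod r)) m := by
    rw [hw, C.dom_comp _ _ hcmp, qd]
  have hlw : 0 < C.l (C.cod w) := by rw [hcw]; exact hlr
  have hse : C.sectStar b (C.cod r) r (m+1) = C.sOp w := aux_sectStar_eq C b r m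
  have htob := aux_tOb_sOp C w hlw
  have hcodS : C.cod (C.sOp w) = C.star (C.cod w) (C.ftMor w) := aux_sOp_cod C w hlw
  have hcmw : C.cod (C.ftMor w) = C.ft (C.cod w) := aux_ftMor_cod C w
  have hftS : C.ft (C.cod (C.sOp w)) = C.starIter b (C.ft (C.cod r)) m := by
    rw [hcodS, C.ft_star _ _ hlw hcmw, aux_ftMor_dom, hdw]
  have hlS : 0 < C.l (C.cod (C.sOp w)) := by
    rw [hcodS]; exact C.l_star _ _ hlw hcmw
  refine ⟨by rw [hse]; exact htob, by rw [hse]; exact hftS, ?_, ?_, ?_⟩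
  · rw [hse, Function.iterate_succ_apply, hftS]; exact qft
  · have h2 := C.l_ft _ hlS
    rw [hftS, ql] at h2
    rw [hse]; omega
  · rw [hse, aux_sOp_dom C w hlw, hdw]

lemma aux_sectStar_comp (a b r : M) (m : ℕ) (hr : r ∈ C.tOb)
    (hab : C.cod a = C.dom b) (hcb : C.cod b = C.ft^[m+1] (C.cod r))
    (hml : m+1 ≤ C.l (C.cod r)) :
    C.sectStar (C.comp a b) (C.cod r) r (m+1) =
      C.sectStar a (C.cod (C.sectStar b (C.cod r) r (m+1)))
        (C.sectStar b (C.cod r) r (m+1)) (m+1) := by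
  obtain ⟨hlr, hdr, hsr⟩ := hr
  have hlft := C.l_ft _ hlr
  have hcb' : C.cod b = C.ft^[m] (C.ft (C.cod r)) := by rw [hcb, Function.iterate_succ_apply]
  obtain ⟨qc, qd, qft, ql⟩ := aux_qIter_facts C m (C.ft (C.cod r)) b hcb' (by omega)
  have hca' : C.cod a = C.ft^[m] (C.starIter b (C.ft (C.cod r)) m) := by rw [hab, qft]
  have hnZ : m ≤ C.l (C.starIter b (C.ft (C.cod r)) m) := by rw [ql]; omega
  obtain ⟨ac, ad, aft, al⟩ := aux_qIter_facts C m (C.starIter b (C.ft (C.cod r)) m) a hca' hnZ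
  set w := C.comp (C.qIter b (C.ft (C.cod r)) m) r with hw
  have hcmp : C.cod (C.qIter b (C.ft (C.cod r)) m) = C.dom r := by rw [qc, hdr]
  have hcw : C.cod w = C.cod r := C.cod_comp _ _ hcmp
  have hdw : C.dom w = C.starIter b (C.ft (C.cod r)) m := by
    rw [hw, C.dom_comp _ _ hcmp, qd]
  have hlw : 0 < C.l (C.cod w) := by rw [hcw]; exact hlr
  obtain ⟨_, hftS, _, _, _⟩ := aux_sectStar_facts C b r m ⟨hlr, hdr, hsr⟩ hcb hml
  rw [aux_sectStar_eq C b r m] at hftS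
  calc C.sectStar (C.comp a b) (C.cod r) r (m+1)
      = C.sOp (C.comp (C.qIter (C.comp a b) (C.ft (C.cod r)) m) r) :=
        aux_sectStar_eq C _ r m
    _ = C.sOp (C.comp (C.comp (C.qIter a (C.starIter b (C.ft (C.cod r)) m) m)
          (C.qIter b (C.ft (C.cod r)) m)) r) := by
        rw [aux_qIter_comp C m (C.ft (C.cod r)) b a hab hcb' (by omega)]
    _ = C.sOp (C.comp (C.qIter a (C.starIter b (C.ft (C.cod r)) m) m) w) := by
        rw [hw, C.comp_assoc _ _ _ (by rw [ac, qd]) hcmp]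
    _ = C.sOp (C.comp (C.qIter a (C.starIter b (C.ft (C.cod r)) m) m) (C.sOp w)) := by
        rw [aux_sOp_comp C _ w (by rw [ac, hdw]) hlw]
    _ = C.sectStar a (C.cod (C.sectStar b (C.cod r) r (m+1)))
        (C.sectStar b (C.cod r) r (m+1)) (m+1) := by
        rw [aux_sectStar_eq C b r m, aux_sectStar_eq C a (C.sOp w) m, hftS]

end Aux
section Aux2

variable {O : Type u} {M : Type v} (C : CSys O M)
variable (B : Set O) (Bt : Set M)

lemma aux_ftMor_id (X : O) : C.ftMor (C.id X) = C.p X := by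
  unfold CSys.ftMor
  rw [C.id_cod]
  conv_lhs => rw [show C.id X = C.id (C.dom (C.p X)) from by rw [C.p_dom]]
  exact C.id_comp (C.p X)

lemma aux_sOp_mem (hBt : Bt ⊆ C.tOb) (hcl : C.Closed B Bt) {r : M} (hr : r ∈ Bt) :
    C.sOp r ∈ Bt := by
  obtain ⟨hlr, hdr, hsr⟩ := hBt hr
  have hXB : C.cod r ∈ B := hcl.2.2.1 r hr
  have hδ : C.delta (C.cod r) ∈ Bt := hcl.2.2.2.2.2 (C.cod r) hXB hlr
  have hlid : 0 < C.l (C.cod (C.id (C.cod r))) := by rw [C.id_cod]; exact hlr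
  have hfid : C.ftMor (C.id (C.cod r)) = C.p (C.cod r) := aux_ftMor_id C (C.cod r)
  have hpc : C.cod (C.p (C.cod r)) = C.ft (C.cod r) := C.p_cod _
  have hcδ : C.cod (C.delta (C.cod r)) = C.star (C.cod r) (C.p (C.cod r)) := by
    show C.cod (C.sOp (C.id (C.cod r))) = _
    rw [aux_sOp_cod C _ hlid, hfid, C.id_cod]
  have hdδ : C.dom (C.delta (C.cod r)) = C.cod r := by
    show C.dom (C.sOp (C.id (C.cod r))) = _
    rw [aux_sOp_dom C _ hlid, C.id_dom]
  have hls : 0 < C.l (C.star (C.cod r) (C.p (C.cod r))) := C.l_star _ _ hlr hpc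
  have hftcδ : C.ft (C.cod (C.delta (C.cod r))) = C.cod r := by
    rw [hcδ, C.ft_star _ _ hlr hpc, C.p_dom]
  have hcr1 : C.cod r = C.ft^[1] (C.cod (C.delta (C.cod r))) := by
    rw [Function.iterate_one, hftcδ]
  have hmem := hcl.2.2.2.2.1 r hr (C.delta (C.cod r)) hδ 1 le_rfl hcr1
  have heq : C.sectStar r (C.cod (C.delta (C.cod r))) (C.delta (C.cod r)) 1 =
      C.sOp (C.comp r (C.delta (C.cod r))) := by
    simp [CSys.sectStar, CSys.qIter]
  rw [heq] at hmem
  have hccomp : C.cod (C.comp r (C.delta (C.cod r))) = C.star (C.cod r) (C.p (C.cod r)) := by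
    rw [C.cod_comp _ _ (by rw [hdδ]), hcδ]
  have e := aux_sOp_nat C (C.comp r (C.delta (C.cod r))) (C.cod r) (C.p (C.cod r)) hlr hpc
    (by rw [hccomp]; exact hls) hccomp
  have hδq : C.comp (C.delta (C.cod r)) (C.q (C.cod r) (C.p (C.cod r))) = C.id (C.cod r) := by
    have := aux_sOp_q C (C.id (C.cod r)) hlid
    rw [hfid, C.id_cod] at this
    exact this
  have e2 : C.comp (C.comp r (C.delta (C.cod r))) (C.q (C.cod r) (C.p (C.cod r))) = r := by
    rw [C.comp_assoc r (C.delta (C.cod r)) _ (by rw [hdδ])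
      (by rw [hcδ, C.q_dom _ _ hlr hpc]), hδq]
    conv_lhs => rw [show C.id (C.cod r) = C.id (C.cod r) from rfl]
    exact C.comp_id r
  rw [e, e2] at hmem
  exact hmem

lemma aux_to_pt_unique (f f' : M) (hd : C.dom f = C.dom f') (hc : C.cod f = C.pt)
    (hc' : C.cod f' = C.pt) : f = f' := by
  obtain ⟨u, _, huniq⟩ := C.pt_final (C.dom f)
  rw [huniq f ⟨rfl, hc⟩, huniq f' ⟨hd.symm, hc'⟩]

lemma aux_L0 (hBt : Bt ⊆ C.tOb) (hcl : C.Closed B Bt) :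
    ∀ (n : ℕ) (g : M), C.l (C.dom g) ≤ n → C.dom g ∈ B → C.cod g = C.pt →
    ∀ (m : ℕ) (r : M), r ∈ Bt → C.cod g = C.ft^[m+1] (C.cod r) → m+1 ≤ C.l (C.cod r) →
    C.sectStar g (C.cod r) r (m+1) ∈ Bt := by
  intro n
  induction n with
  | zero =>
    intro g hn hZB hgc m r hr hgc' hml
    obtain ⟨hlr, hdr, hsr⟩ := hBt hr
    have hZpt : C.dom g = C.pt := C.eq_pt _ (by omega)
    have hgid : g = C.id C.pt := by
      refine aux_to_pt_unique C g (C.id C.pt) ?_ hgc (C.id_cod _)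
      rw [C.id_dom, hZpt]
    have hlft := C.l_ft _ hlr
    have e : C.pt = C.ft^[m] (C.ft (C.cod r)) := by
      rw [← Function.iterate_succ_apply, ← hgc', hgc]
    have heq : C.sectStar g (C.cod r) r (m+1) = C.sOp r := by
      rw [aux_sectStar_eq C g r m, hgid, e,
        aux_qIter_id C m (C.ft (C.cod r)) (by omega)]
      rw [show C.id (C.ft (C.cod r)) = C.id (C.dom r) from by rw [hdr], C.id_comp r]
    rw [heq]
    exact aux_sOp_mem C B Bt hBt hcl hr
  | succ n ih =>
    intro g hn hZB hgc m r hr hgc' hml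
    by_cases hz : C.l (C.dom g) ≤ n
    · exact ih g hz hZB hgc m r hr hgc' hml
    · have hlZ : 0 < C.l (C.dom g) := by omega
      obtain ⟨u, ⟨hud, huc⟩, _⟩ := C.pt_final (C.ft (C.dom g))
      have hpc : C.cod (C.p (C.dom g)) = C.ft (C.dom g) := C.p_cod _
      have hab : C.cod (C.p (C.dom g)) = C.dom u := by rw [hpc, hud]
      have hg : g = C.comp (C.p (C.dom g)) u := by
        refine aux_to_pt_unique C g _ ?_ hgc ?_
        · rw [C.dom_comp _ _ hab, C.p_dom]
        · rw [C.cod_comp _ _ hab, huc]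
      have hcu : C.cod u = C.ft^[m+1] (C.cod r) := by rw [huc, ← hgc, hgc']
      have hrT := hBt hr
      have hs' : C.sectStar u (C.cod r) r (m+1) ∈ Bt := by
        refine ih u ?_ ?_ huc m r hr hcu hml
        · rw [hud]; have := C.l_ft _ hlZ; omega
        · rw [hud]; exact hcl.2.1 _ hZB
      obtain ⟨hs'T, _, hs'ft, hs'l, _⟩ := aux_sectStar_facts C u r m hrT hcu hml
      rw [hud] at hs'ft hs'l
      have heq := aux_sectStar_comp C (C.p (C.dom g)) u r m hrT hab hcu hml
      rw [hg, heq]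
      exact hcl.2.2.2.1 (C.dom g) hZB _ hs' hlZ (m+1) (by omega) (by omega) hs'ft.symm

lemma aux_L (hBt : Bt ⊆ C.tOb) (hcl : C.Closed B Bt) (g : M) (hg : MorIn C B Bt g) :
    ∀ (m : ℕ) (r : M), r ∈ Bt → C.cod g = C.ft^[m+1] (C.cod r) → m+1 ≤ C.l (C.cod r) →
    C.sectStar g (C.cod r) r (m+1) ∈ Bt := by
  induction hg with
  | base f hc hd =>
    intro m r hr hcg hml
    exact aux_L0 C B Bt hBt hcl (C.l (C.dom f)) f le_rfl hd hc m r hr hcg hml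
  | step f hlf hfB hmor hsf ih =>
    intro m r hr hcg hml
    obtain ⟨hlr, hdr, hsr⟩ := hBt hr
    have hlft := C.l_ft _ hlr
    have hch₁ : C.cod (C.ftMor f) = C.ft (C.cod f) := aux_ftMor_cod C f
    have hlX : C.l (C.ft^[m+1] (C.cod r)) = C.l (C.cod r) - (m+1) :=
      aux_l_ft_iter C (m+1) (C.cod r) hml
    have hmlt : m+2 ≤ C.l (C.cod r) := by
      rw [← hcg] at hlX; omega
    have e2 : C.ft^[m+1] (C.ft (C.cod r)) = C.ft (C.ft^[m+1] (C.cod r)) := by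
      rw [← Function.iterate_succ_apply, Function.iterate_succ_apply']
    have hch₁' : C.cod (C.ftMor f) = C.ft^[m+2] (C.cod r) := by
      rw [hch₁, hcg]
      exact (Function.iterate_succ_apply' C.ft (m+1) (C.cod r)).symm
    have hch₁'' : C.cod (C.ftMor f) = C.ft^[m+1] (C.ft (C.cod r)) := by
      rw [hch₁', Function.iterate_succ_apply]
    -- the peel identity
    have hpeel : C.qIter (C.ftMor f) (C.ft (C.cod r)) (m+1) =
        C.qIter (C.q (C.cod f) (C.ftMor f)) (C.ft (C.cod r)) m := by
      rw [aux_qIter_peel C m (C.ft (C.cod r)) (C.ftMor f) hch₁'' (by omega)]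
      congr 2
      rw [← Function.iterate_succ_apply, ← hcg]
    have hseq : C.sectStar (C.q (C.cod f) (C.ftMor f)) (C.cod r) r (m+1) =
        C.sectStar (C.ftMor f) (C.cod r) r (m+2) := by
      rw [aux_sectStar_eq C _ r m, aux_sectStar_eq C _ r (m+1), hpeel]
    have hs' : C.sectStar (C.q (C.cod f) (C.ftMor f)) (C.cod r) r (m+1) ∈ Bt := by
      rw [hseq]
      exact ih (m+1) r hr hch₁' hmlt
    have hcb : C.cod (C.q (C.cod f) (C.ftMor f)) = C.ft^[m+1] (C.cod r) := by
      rw [C.q_cod _ _ hlf hch₁, hcg]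
    have hab : C.cod (C.sOp f) = C.dom (C.q (C.cod f) (C.ftMor f)) := by
      rw [aux_sOp_cod C f hlf, C.q_dom _ _ hlf hch₁]
    have hfeq : f = C.comp (C.sOp f) (C.q (C.cod f) (C.ftMor f)) := (aux_sOp_q C f hlf).symm
    obtain ⟨_, _, hs'ft, _, _⟩ :=
      aux_sectStar_facts C (C.q (C.cod f) (C.ftMor f)) r m (hBt hr) hcb hml
    have heq := aux_sectStar_comp C (C.sOp f) (C.q (C.cod f) (C.ftMor f)) r m (hBt hr)
      hab hcb hml
    rw [show C.sectStar f (C.cod r) r (m+1) =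
      C.sectStar (C.comp (C.sOp f) (C.q (C.cod f) (C.ftMor f))) (C.cod r) r (m+1) from by
        rw [← hfeq], heq]
    refine hcl.2.2.2.2.1 (C.sOp f) hsf _ hs' (m+1) (by omega) ?_
    rw [aux_sOp_cod C f hlf, hs'ft, C.q_dom _ _ hlf hch₁]

lemma aux_dom_mem {f : M} (hf : MorIn C B Bt f) : C.dom f ∈ B := by
  induction hf with
  | base f hc hd => exact hd
  | step f hlf hfB hmor hsf ih => rw [← aux_ftMor_dom C f]; exact ih

end Aux2
/-- Lemma 2009.10.16.l4: `Mor(CC')` is closed under composition. -/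
theorem stmt10 {Ob : Type u} {Mor : Type v} (C : CSys Ob Mor)
    (B : Set Ob) (Bt : Set Mor) (hBt : Bt ⊆ C.tOb) (h : C.Closed B Bt)
    (g f : Mor) (hg : MorIn C B Bt g) (hf : MorIn C B Bt f)
    (hgf : C.cod g = C.dom f) :
    MorIn C B Bt (C.comp g f) := by
  revert hgf
  induction hf with
  | base f hc hd =>
    intro hgf
    exact MorIn.base _ (by rw [C.cod_comp g f hgf, hc])
      (by rw [C.dom_comp g f hgf]; exact aux_dom_mem C B Bt hg)
  | step f hlf hfB hmor hsf ih =>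
    intro hgf
    have hc1 : C.cod (C.comp g f) = C.cod f := C.cod_comp g f hgf
    have hfm : C.ftMor (C.comp g f) = C.comp g (C.ftMor f) := by
      unfold CSys.ftMor
      rw [hc1, C.comp_assoc g f (C.p (C.cod f)) hgf (by rw [C.p_dom])]
    refine MorIn.step _ (by rw [hc1]; exact hlf) (by rw [hc1]; exact hfB) ?_ ?_
    · rw [hfm]
      exact ih (by rw [aux_ftMor_dom]; exact hgf)
    · have hrT := hBt hsf
      have e := aux_sOp_comp C g f hgf hlf
      have hc2 : C.cod g = C.ft^[0+1] (C.cod (C.sOp f)) := by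
        rw [Function.iterate_one, ← hrT.2.1, aux_sOp_dom C f hlf, hgf]
      have hmem := aux_L C B Bt hBt h g hg 0 (C.sOp f) hsf hc2 (by have := hrT.1; omega)
      have e3 : C.sectStar g (C.cod (C.sOp f)) (C.sOp f) 1 =
          C.sOp (C.comp g (C.sOp f)) := by
        simp [CSys.sectStar, CSys.qIter]
      rw [e3] at hmem
      rw [e]; exact hmem
end

section
/- Let CC be a C-system and let (B, B̃) satisfy the closure conditions (1)–(6), with Mor(CC') defined inductively as: f : Y → pt is in Mor(CC') iff Y ∈ B; f : Y → X with l(X) > 0 is in Mor(CC') iff X ∈ B, ft(f) ∈ Mor(CC') and s_f ∈ B̃. Then for every X ∈ B with l(X) > 0 and every f : Y → ft(X) in Mor(CC'), one has f*(X) ∈ B and q(f,X) ∈ Mor(CC'). -/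
universe u v

namespace CSys

variable {Ob : Type u} {Mor : Type v} (C : CSys Ob Mor)

lemma sOp_dom (f : Mor) (hf : 0 < C.l (C.cod f)) : C.dom (C.sOp f) = C.dom f :=
  C.sOp_spec.1 f hf

lemma sOp_cod (f : Mor) (hf : 0 < C.l (C.cod f)) :
    C.cod (C.sOp f) = C.star (C.cod f) (C.ftMor f) := C.sOp_spec.2.1 f hf

lemma sOp_q (f : Mor) (hf : 0 < C.l (C.cod f)) :
    C.comp (C.sOp f) (C.q (C.cod f) (C.ftMor f)) = f := C.sOp_spec.2.2.2.1 f hf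

lemma sOp_ax5 (f : Mor) (U : Ob) (g : Mor) (hU : 0 < C.l U) (hg : C.cod g = C.ft U)
    (hf : 0 < C.l (C.cod f)) (hc : C.cod f = C.star U g) :
    C.sOp f = C.sOp (C.comp f (C.q U g)) := C.sOp_spec.2.2.2.2 f U g hU hg hf hc

lemma ftMor_dom (f : Mor) : C.dom (C.ftMor f) = C.dom f := by
  unfold CSys.ftMor
  rw [C.dom_comp f (C.p (C.cod f)) (C.p_dom _).symm]

lemma ftMor_cod (f : Mor) : C.cod (C.ftMor f) = C.ft (C.cod f) := by
  unfold CSys.ftMor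
  rw [C.cod_comp f (C.p (C.cod f)) (C.p_dom _).symm, C.p_cod]

lemma l_ft_iter (k : ℕ) (X : Ob) : C.l (C.ft^[k] X) = C.l X - k := by
  induction k generalizing X with
  | zero => simp
  | succ n ih =>
    rw [Function.iterate_succ_apply']
    by_cases h : 0 < C.l (C.ft^[n] X)
    · rw [C.l_ft _ h, ih]; omega
    · have h0 : C.l (C.ft^[n] X) = 0 := by omega
      have hpt := C.eq_pt _ h0
      rw [hpt, C.ft_pt, C.l_pt]
      have := ih X
      omega

lemma ft_iter_pt (k : ℕ) (X : Ob) (h : C.l X ≤ k) : C.ft^[k] X = C.pt :=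
  C.eq_pt _ (by rw [C.l_ft_iter]; omega)

lemma l_star' (X : Ob) (f : Mor) (hX : 0 < C.l X) (hf : C.cod f = C.ft X) :
    C.l (C.star X f) = C.l (C.dom f) + 1 := by
  have h1 := C.l_star X f hX hf
  have h2 := C.l_ft _ h1
  rw [C.ft_star X f hX hf] at h2
  omega

lemma sOp_tOb (f : Mor) (hf : 0 < C.l (C.cod f)) : C.sOp f ∈ C.tOb := by
  refine ⟨?_, ?_, ?_⟩
  · rw [C.sOp_cod f hf]; exact C.l_star _ _ hf (C.ftMor_cod f)
  · rw [C.sOp_dom f hf, C.sOp_cod f hf, C.ft_star _ _ hf (C.ftMor_cod f), C.ftMor_dom]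
  · rw [C.sOp_cod f hf, C.ft_star _ _ hf (C.ftMor_cod f), C.ftMor_dom]
    exact C.sOp_spec.2.2.1 f hf

lemma sOp_sec (r : Mor) (hr : r ∈ C.tOb) : C.sOp r = r := by
  obtain ⟨hl, hd, hs⟩ := hr
  have hft : C.ftMor r = C.id (C.ft (C.cod r)) := hs
  have h4 := C.sOp_q r hl
  rw [hft, C.q_id _ hl] at h4
  have hc : C.cod (C.sOp r) = C.cod r := by
    rw [C.sOp_cod r hl, hft, C.star_id _ hl]
  calc C.sOp r = C.comp (C.sOp r) (C.id (C.cod (C.sOp r))) := (C.comp_id _).symm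
    _ = r := by rw [hc]; exact h4

lemma sComp (a g : Mor) (hc : C.cod a = C.dom g) (hg : 0 < C.l (C.cod g)) :
    C.sOp (C.comp a g) = C.sOp (C.comp a (C.sOp g)) := by
  have h1 : C.cod a = C.dom (C.sOp g) := by rw [C.sOp_dom g hg, hc]
  have h2 : C.cod (C.sOp g) = C.dom (C.q (C.cod g) (C.ftMor g)) := by
    rw [C.sOp_cod g hg, C.q_dom _ _ hg (C.ftMor_cod g)]
  have hcs : C.cod (C.comp a (C.sOp g)) = C.star (C.cod g) (C.ftMor g) := by
    rw [C.cod_comp _ _ h1, C.sOp_cod g hg]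
  have hpos : 0 < C.l (C.cod (C.comp a (C.sOp g))) := by
    rw [hcs]; exact C.l_star _ _ hg (C.ftMor_cod g)
  have h5 := C.sOp_ax5 (C.comp a (C.sOp g)) (C.cod g) (C.ftMor g) hg (C.ftMor_cod g) hpos hcs
  rw [h5, C.comp_assoc _ _ _ h1 h2, C.sOp_q g hg]

end CSys
namespace CSys

variable {Ob : Type u} {Mor : Type v} (C : CSys Ob Mor)

lemma pIter_zero (X : Ob) : C.pIter X 0 = C.id X := rfl

lemma pIter_succ (X : Ob) (i : ℕ) :
    C.pIter X (i + 1) = C.comp (C.pIter X i) (C.p (C.ft^[i] X)) := rfl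

lemma cod_pIter (i : ℕ) (X : Ob) : C.cod (C.pIter X i) = C.ft^[i] X := by
  induction i with
  | zero => simp [C.pIter_zero, C.id_cod]
  | succ n ih =>
    rw [C.pIter_succ, C.cod_comp _ _ (by rw [ih, C.p_dom]), C.p_cod,
      Function.iterate_succ_apply']

lemma dom_pIter (i : ℕ) (X : Ob) : C.dom (C.pIter X i) = X := by
  induction i with
  | zero => simp [C.pIter_zero, C.id_dom]
  | succ n ih =>
    rw [C.pIter_succ, C.dom_comp _ _ (by rw [C.cod_pIter, C.p_dom]), ih]

lemma pIter_one (X : Ob) : C.pIter X 1 = C.p X := by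
  show C.comp (C.id X) (C.p X) = C.p X
  have := C.id_comp (C.p X)
  rwa [C.p_dom] at this

lemma pIter_succ_left (k : ℕ) (X : Ob) :
    C.pIter X (k + 1) = C.comp (C.p X) (C.pIter (C.ft X) k) := by
  induction k generalizing X with
  | zero =>
    rw [C.pIter_one, C.pIter_zero]
    have := C.comp_id (C.p X)
    rw [C.p_cod] at this
    exact this.symm
  | succ n ih =>
    rw [C.pIter_succ X (n + 1), ih, C.pIter_succ (C.ft X) n,
      C.comp_assoc _ _ _ (by rw [C.p_cod, C.dom_pIter])
        (by rw [C.cod_pIter, C.p_dom, Function.iterate_succ_apply]),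
      Function.iterate_succ_apply]

lemma qIter_zero (f : Mor) (X : Ob) : C.qIter f X 0 = f := rfl

lemma qIter_succ (f : Mor) (X : Ob) (i : ℕ) :
    C.qIter f X (i + 1) = C.q X (C.qIter f (C.ft X) i) := rfl

lemma starIter_zero (f : Mor) (X : Ob) : C.starIter f X 0 = C.dom f := rfl

lemma starIter_succ (f : Mor) (X : Ob) (i : ℕ) :
    C.starIter f X (i + 1) = C.star X (C.qIter f (C.ft X) i) := rfl

lemma cod_qIter (i : ℕ) (X : Ob) (f : Mor) (hi : i ≤ C.l X) (hc : C.cod f = C.ft^[i] X) :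
    C.cod (C.qIter f X i) = X := by
  induction i generalizing X with
  | zero => simpa [C.qIter_zero] using hc
  | succ n ih =>
    have hX : 0 < C.l X := by omega
    have hlft := C.l_ft X hX
    rw [C.qIter_succ]
    exact C.q_cod X _ hX
      (ih (C.ft X) (by omega) (by rw [← Function.iterate_succ_apply]; exact hc))

lemma dom_qIter (i : ℕ) (X : Ob) (f : Mor) (hi : i ≤ C.l X) (hc : C.cod f = C.ft^[i] X) :
    C.dom (C.qIter f X i) = C.starIter f X i := by
  cases i with
  | zero => rfl
  | succ n =>
    have hX : 0 < C.l X := by omega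
    have hlft := C.l_ft X hX
    rw [C.qIter_succ, C.starIter_succ]
    exact C.q_dom X _ hX
      (C.cod_qIter n (C.ft X) f (by omega) (by rw [← Function.iterate_succ_apply]; exact hc))

lemma ft_starIter (i : ℕ) (X : Ob) (f : Mor) (hi : i + 1 ≤ C.l X)
    (hc : C.cod f = C.ft^[i + 1] X) :
    C.ft (C.starIter f X (i + 1)) = C.starIter f (C.ft X) i := by
  have hX : 0 < C.l X := by omega
  have hlft := C.l_ft X hX
  have hc' : C.cod f = C.ft^[i] (C.ft X) := by rw [← Function.iterate_succ_apply]; exact hc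
  rw [C.starIter_succ, C.ft_star _ _ hX (C.cod_qIter i (C.ft X) f (by omega) hc'),
    C.dom_qIter i (C.ft X) f (by omega) hc']

lemma l_starIter (i : ℕ) (X : Ob) (f : Mor) (hi : i ≤ C.l X) (hc : C.cod f = C.ft^[i] X) :
    C.l (C.starIter f X i) = C.l (C.dom f) + i := by
  induction i generalizing X with
  | zero => rfl
  | succ n ih =>
    have hX : 0 < C.l X := by omega
    have hlft := C.l_ft X hX
    have hc' : C.cod f = C.ft^[n] (C.ft X) := by rw [← Function.iterate_succ_apply]; exact hc
    rw [C.starIter_succ, C.l_star' X _ hX (C.cod_qIter n (C.ft X) f (by omega) hc'),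
      C.dom_qIter n (C.ft X) f (by omega) hc', ih (C.ft X) (by omega) hc']; omega

lemma ft_iter_starIter (j i : ℕ) (X : Ob) (f : Mor) (hj : j ≤ i) (hi : i ≤ C.l X)
    (hc : C.cod f = C.ft^[i] X) :
    C.ft^[j] (C.starIter f X i) = C.starIter f (C.ft^[j] X) (i - j) := by
  induction j generalizing X i with
  | zero => simp
  | succ n ih =>
    obtain ⟨m, rfl⟩ : ∃ m, i = m + 1 := ⟨i - 1, by omega⟩
    have hX : 0 < C.l X := by omega
    have hlft := C.l_ft X hX
    have hc' : C.cod f = C.ft^[m] (C.ft X) := by rw [← Function.iterate_succ_apply]; exact hc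
    rw [Function.iterate_succ_apply, C.ft_starIter m X f hi hc,
      ih m (C.ft X) (by omega) (by omega) hc', ← Function.iterate_succ_apply]
    congr 1
    omega

lemma ft_iter_starIter_top (i : ℕ) (X : Ob) (f : Mor) (hi : i ≤ C.l X)
    (hc : C.cod f = C.ft^[i] X) :
    C.ft^[i] (C.starIter f X i) = C.dom f := by
  rw [C.ft_iter_starIter i i X f le_rfl hi hc]
  simp [C.starIter_zero]

lemma l_cod_sOp (f : Mor) (hf : 0 < C.l (C.cod f)) :
    C.l (C.cod (C.sOp f)) = C.l (C.dom f) + 1 := by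
  rw [C.sOp_cod f hf, C.l_star' _ _ hf (C.ftMor_cod f), C.ftMor_dom]

lemma ft_cod_sOp (f : Mor) (hf : 0 < C.l (C.cod f)) :
    C.ft (C.cod (C.sOp f)) = C.dom f := by
  rw [C.sOp_cod f hf, C.ft_star _ _ hf (C.ftMor_cod f), C.ftMor_dom]

lemma qIter_id (i : ℕ) (X : Ob) (hi : i + 1 ≤ C.l X) :
    C.qIter (C.id (C.ft^[i + 1] X)) X (i + 1) = C.id X := by
  induction i generalizing X with
  | zero =>
    have hX : 0 < C.l X := by omega
    rw [C.qIter_succ, C.qIter_zero, Function.iterate_one]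
    exact C.q_id X hX
  | succ n ih =>
    have hX : 0 < C.l X := by omega
    have hlft := C.l_ft X hX
    rw [C.qIter_succ, Function.iterate_succ_apply, ih (C.ft X) (by omega)]
    exact C.q_id X hX

lemma qIter_q (i : ℕ) (X : Ob) (g : Mor) :
    C.qIter (C.q (C.ft^[i] X) g) X i = C.qIter g X (i + 1) := by
  induction i generalizing X with
  | zero => rfl
  | succ n ih =>
    rw [C.qIter_succ, Function.iterate_succ_apply, ih (C.ft X)]
    rfl

lemma starIter_q (i : ℕ) (X : Ob) (g : Mor) (hi : i < C.l X)
    (hc : C.cod g = C.ft^[i + 1] X) :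
    C.starIter (C.q (C.ft^[i] X) g) X i = C.starIter g X (i + 1) := by
  cases i with
  | zero =>
    show C.dom (C.q X g) = _
    rw [C.starIter_succ, C.qIter_zero]
    exact C.q_dom X g (by omega) (by simpa using hc)
  | succ n =>
    rw [C.starIter_succ, Function.iterate_succ_apply, C.qIter_q]
    rfl

end CSys
namespace CSys

variable {Ob : Type u} {Mor : Type v} (C : CSys Ob Mor)

lemma qIter_comp (i : ℕ) (X : Ob) (a b : Mor) (hi : i ≤ C.l X)
    (hcb : C.cod b = C.ft^[i] X) (hab : C.cod a = C.dom b) :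
    C.qIter (C.comp a b) X i
      = C.comp (C.qIter a (C.starIter b X i) i) (C.qIter b X i) ∧
    C.starIter (C.comp a b) X i = C.starIter a (C.starIter b X i) i := by
  induction i generalizing X with
  | zero =>
    refine ⟨rfl, ?_⟩
    show C.dom (C.comp a b) = C.dom a
    exact C.dom_comp a b hab
  | succ n ih =>
    have hX : 0 < C.l X := by omega
    have hlft := C.l_ft X hX
    have hcb' : C.cod b = C.ft^[n] (C.ft X) := by
      rw [← Function.iterate_succ_apply]; exact hcb
    obtain ⟨ihq, ihs⟩ := ih (C.ft X) (by omega) hcb'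
    have hcodQb : C.cod (C.qIter b (C.ft X) n) = C.ft X :=
      C.cod_qIter n (C.ft X) b (by omega) hcb'
    have hdomQb : C.dom (C.qIter b (C.ft X) n) = C.starIter b (C.ft X) n :=
      C.dom_qIter n (C.ft X) b (by omega) hcb'
    have hcodQa : C.cod (C.qIter a (C.starIter b (C.ft X) n) n)
        = C.starIter b (C.ft X) n := by
      apply C.cod_qIter n _ a
      · rw [C.l_starIter n (C.ft X) b (by omega) hcb']; omega
      · rw [C.ft_iter_starIter n n (C.ft X) b le_rfl (by omega) hcb']
        simpa [C.starIter_zero] using hab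
    have hQaQb : C.cod (C.qIter a (C.starIter b (C.ft X) n) n)
        = C.dom (C.qIter b (C.ft X) n) := by rw [hcodQa, hdomQb]
    have hfs : C.ft (C.star X (C.qIter b (C.ft X) n)) = C.starIter b (C.ft X) n := by
      rw [C.ft_star _ _ hX hcodQb, hdomQb]
    constructor
    · show C.q X (C.qIter (C.comp a b) (C.ft X) n)
        = C.comp (C.q (C.starIter b X (n+1))
            (C.qIter a (C.ft (C.starIter b X (n+1))) n)) (C.q X (C.qIter b (C.ft X) n))
      rw [C.starIter_succ, hfs, ihq]
      exact C.q_comp X (C.qIter b (C.ft X) n) (C.qIter a (C.starIter b (C.ft X) n) n)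
        hX hcodQb hQaQb
    · show C.star X (C.qIter (C.comp a b) (C.ft X) n)
        = C.star (C.starIter b X (n+1)) (C.qIter a (C.ft (C.starIter b X (n+1))) n)
      rw [C.starIter_succ, hfs, ihq]
      exact C.star_comp X (C.qIter b (C.ft X) n) (C.qIter a (C.starIter b (C.ft X) n) n)
        hX hcodQb hQaQb

end CSys

section MorInAux

variable {Ob : Type u} {Mor : Type v} {C : CSys Ob Mor} {B : Set Ob} {Bt : Set Mor}

lemma MorIn.dom_mem {f : Mor} (hf : MorIn C B Bt f) (h : C.Closed B Bt) :
    C.dom f ∈ B := by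
  induction hf with
  | base f hc hd => exact hd
  | step f hl hB hft hs ih => rw [← C.ftMor_dom f]; exact ih

lemma pComp_s (hBt : Bt ⊆ C.tOb) (h : C.Closed B Bt) (X : Ob) (g : Mor)
    (hX : X ∈ B) (hlX : 0 < C.l X) (hdg : C.dom g = C.ft X) (hlg : 0 < C.l (C.cod g))
    (hsg : C.sOp g ∈ Bt) : C.sOp (C.comp (C.p X) g) ∈ Bt := by
  have hpc : C.cod (C.p X) = C.dom g := by rw [C.p_cod, hdg]
  rw [C.sComp (C.p X) g hpc hlg]
  have h4 := h.2.2.2.1 X hX (C.sOp g) hsg hlX 1 le_rfl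
    (by rw [C.l_cod_sOp g hlg]; omega)
    (by rw [Function.iterate_one, C.ft_cod_sOp g hlg, hdg])
  simpa [CSys.sectStar, C.qIter_zero] using h4

lemma PIT (hBt : Bt ⊆ C.tOb) (h : C.Closed B Bt) :
    ∀ (k : ℕ) (W : Ob) (r : Mor), W ∈ B → r ∈ Bt → C.dom r = C.ft^[k] W →
      k ≤ C.l W → C.sOp (C.comp (C.pIter W k) r) ∈ Bt := by
  intro k
  induction k with
  | zero =>
    intro W r hW hr hd _
    have : C.comp (C.pIter W 0) r = r := by
      rw [C.pIter_zero]
      have := C.id_comp r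
      rw [hd] at this
      simpa using this
    rw [this, C.sOp_sec r (hBt hr)]
    exact hr
  | succ n ih =>
    intro W r hW hr hd hk
    have hlW : 0 < C.l W := by omega
    have hlft := C.l_ft W hlW
    have hd' : C.dom r = C.ft^[n] (C.ft W) := by
      rw [← Function.iterate_succ_apply]; exact hd
    have hcodP : C.cod (C.pIter (C.ft W) n) = C.dom r := by
      rw [C.cod_pIter, hd']
    have hassoc : C.comp (C.pIter W (n+1)) r
        = C.comp (C.p W) (C.comp (C.pIter (C.ft W) n) r) := by
      rw [C.pIter_succ_left, C.comp_assoc _ _ _ (by rw [C.p_cod, C.dom_pIter]) hcodP]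
    rw [hassoc]
    have hlr : 0 < C.l (C.cod r) := (hBt hr).1
    apply pComp_s hBt h W _ hW hlW
    · rw [C.dom_comp _ _ hcodP, C.dom_pIter]
    · rw [C.cod_comp _ _ hcodP]; exact hlr
    · exact ih (C.ft W) r (h.2.1 W hW) hr hd' (by omega)

lemma TAIL (hBt : Bt ⊆ C.tOb) (h : C.Closed B Bt) {f : Mor} (hf : MorIn C B Bt f) :
    ∀ (k : ℕ) (W : Ob), W ∈ B → C.dom f = C.ft^[k] W → k ≤ C.l W →
      MorIn C B Bt (C.comp (C.pIter W k) f) := by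
  induction hf with
  | base f hc hd =>
    intro k W hW hdf hk
    have hcodP : C.cod (C.pIter W k) = C.dom f := by rw [C.cod_pIter, hdf]
    exact MorIn.base _ (by rw [C.cod_comp _ _ hcodP]; exact hc)
      (by rw [C.dom_comp _ _ hcodP, C.dom_pIter]; exact hW)
  | step f hl hB hft hs ih =>
    intro k W hW hdf hk
    have hcodP : C.cod (C.pIter W k) = C.dom f := by rw [C.cod_pIter, hdf]
    have hcc : C.cod (C.comp (C.pIter W k) f) = C.cod f := C.cod_comp _ _ hcodP
    have hftm : C.ftMor (C.comp (C.pIter W k) f) = C.comp (C.pIter W k) (C.ftMor f) := by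
      unfold CSys.ftMor
      rw [hcc, C.comp_assoc _ _ _ hcodP (C.p_dom (C.cod f)).symm]
    apply MorIn.step
    · rw [hcc]; exact hl
    · rw [hcc]; exact hB
    · rw [hftm]
      exact ih k W hW (by rw [C.ftMor_dom]; exact hdf) hk
    · rw [C.sComp _ _ hcodP hl]
      exact PIT hBt h k W (C.sOp f) hW hs (by rw [C.sOp_dom f hl]; exact hdf) hk

end MorInAux
section MainAux

variable {Ob : Type u} {Mor : Type v} {C : CSys Ob Mor} {B : Set Ob} {Bt : Set Mor}

lemma partB (hBt : Bt ⊆ C.tOb) (h : C.Closed B Bt) :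
    ∀ (n : ℕ) (f : Mor) (X : Ob) (i : ℕ), C.l (C.cod f) + C.l (C.dom f) ≤ n →
      MorIn C B Bt f → X ∈ B → 1 ≤ i → i ≤ C.l X → C.cod f = C.ft^[i] X →
      C.sOp (C.qIter f X i) ∈ Bt := by
  intro n
  induction n using Nat.strong_induction_on with
  | _ n IH =>
  intro f X i hn hf hX h1i hiX hc
  cases hf with
  | base _ hcpt hYB =>
    have hXpt : C.ft^[i] X = C.pt := by rw [← hc]; exact hcpt
    have hlfi := C.l_ft_iter i X
    rw [hXpt, C.l_pt] at hlfi
    have hn' : C.l (C.dom f) ≤ n := by rw [hcpt, C.l_pt] at hn; omega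
    by_cases hY : 0 < C.l (C.dom f)
    · -- f factors as p (dom f) ∘ f'
      obtain ⟨f', ⟨hd', hc'⟩, _⟩ := C.pt_final (C.ft (C.dom f))
      obtain ⟨u, -, huniq⟩ := C.pt_final (C.dom f)
      have hcomp_dc : C.cod (C.p (C.dom f)) = C.dom f' := by rw [C.p_cod, hd']
      have hfe : f = C.comp (C.p (C.dom f)) f' :=
        (huniq f ⟨rfl, hcpt⟩).trans (huniq (C.comp (C.p (C.dom f)) f')
          ⟨by rw [C.dom_comp _ _ hcomp_dc, C.p_dom], by rw [C.cod_comp _ _ hcomp_dc, hc']⟩).symm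
      have hf' : MorIn C B Bt f' := MorIn.base f' hc' (by rw [hd']; exact h.2.1 _ hYB)
      have hcf' : C.cod f' = C.ft^[i] X := by rw [hc', hXpt]
      have hmeas : C.l (C.cod f') + C.l (C.dom f') < n := by
        rw [hc', C.l_pt, hd', C.l_ft _ hY]; omega
      have hsin : C.sOp (C.qIter f' X i) ∈ Bt :=
        IH _ hmeas f' X i le_rfl hf' hX h1i hiX hcf'
      obtain ⟨hq_eq, -⟩ := C.qIter_comp i X (C.p (C.dom f)) f' hiX hcf' hcomp_dc
      rw [hfe, hq_eq]
      have hdomQf' : C.dom (C.qIter f' X i) = C.starIter f' X i :=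
        C.dom_qIter i X f' hiX hcf'
      have hcodQp : C.cod (C.qIter (C.p (C.dom f)) (C.starIter f' X i) i)
          = C.starIter f' X i := by
        apply C.cod_qIter i _ (C.p (C.dom f))
        · rw [C.l_starIter i X f' hiX hcf']; omega
        · rw [C.ft_iter_starIter_top i X f' hiX hcf', C.p_cod, hd']
      rw [C.sComp _ _ (by rw [hcodQp, hdomQf'])
        (by rw [C.cod_qIter i X f' hiX hcf']; omega)]
      have hlQf' : 0 < C.l (C.cod (C.qIter f' X i)) := by
        rw [C.cod_qIter i X f' hiX hcf']; omega
      have h4 := h.2.2.2.1 (C.dom f) hYB (C.sOp (C.qIter f' X i)) hsin hY (i+1)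
        (by omega)
        (by rw [C.l_cod_sOp _ hlQf', hdomQf', C.l_starIter i X f' hiX hcf']; omega)
        (by rw [Function.iterate_succ_apply, C.ft_cod_sOp _ hlQf', hdomQf',
              C.ft_iter_starIter_top i X f' hiX hcf', hd'])
      have he : C.sectStar (C.p (C.dom f)) (C.cod (C.sOp (C.qIter f' X i)))
            (C.sOp (C.qIter f' X i)) (i+1)
          = C.sOp (C.comp (C.qIter (C.p (C.dom f)) (C.starIter f' X i) i)
              (C.sOp (C.qIter f' X i))) := by
        unfold CSys.sectStar
        simp only [Nat.add_sub_cancel]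
        rw [C.ft_cod_sOp _ hlQf', hdomQf']
      rw [← he]
      exact h4
    · -- dom f = pt, f = id pt
      have hYpt : C.dom f = C.pt := C.eq_pt _ (by omega)
      obtain ⟨u, -, huniq⟩ := C.pt_final C.pt
      have hfu : f = C.id C.pt :=
        (huniq f ⟨hYpt, hcpt⟩).trans (huniq (C.id C.pt) ⟨C.id_dom _, C.id_cod _⟩).symm
      obtain ⟨j, rfl⟩ : ∃ j, i = j + 1 := ⟨i - 1, by omega⟩
      have hfe : f = C.id (C.ft^[j+1] X) := by rw [hfu, hXpt]
      rw [hfe, C.qIter_id j X (by omega)]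
      exact h.2.2.2.2.2 X hX (by omega)
  | step _ hl hcodB hg hs =>
    have hlfi := C.l_ft_iter i X
    rw [← hc] at hlfi
    have hiX1 : i + 1 ≤ C.l X := by omega
    have hlX : 0 < C.l X := by omega
    have hcodg : C.cod (C.ftMor f) = C.ft^[i+1] X := by
      rw [C.ftMor_cod, hc]
      exact (Function.iterate_succ_apply' C.ft i X).symm
    have hcodb : C.cod (C.q (C.cod f) (C.ftMor f)) = C.ft^[i] X := by
      rw [C.q_cod _ _ hl (C.ftMor_cod f)]; exact hc
    have hab : C.cod (C.sOp f) = C.dom (C.q (C.cod f) (C.ftMor f)) := by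
      rw [C.sOp_cod f hl, C.q_dom _ _ hl (C.ftMor_cod f)]
    obtain ⟨hq_eq, -⟩ :=
      C.qIter_comp i X (C.sOp f) (C.q (C.cod f) (C.ftMor f)) hiX hcodb hab
    have hb_eq : C.q (C.cod f) (C.ftMor f) = C.q (C.ft^[i] X) (C.ftMor f) := by rw [hc]
    have hqq : C.qIter (C.q (C.cod f) (C.ftMor f)) X i = C.qIter (C.ftMor f) X (i+1) := by
      rw [hb_eq, C.qIter_q]
    have hsq : C.starIter (C.q (C.cod f) (C.ftMor f)) X i
        = C.starIter (C.ftMor f) X (i+1) := by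
      rw [hb_eq]; exact C.starIter_q i X (C.ftMor f) (by omega) hcodg
    have hkey : C.qIter f X i
        = C.comp (C.qIter (C.sOp f) (C.starIter (C.ftMor f) X (i+1)) i)
            (C.qIter (C.ftMor f) X (i+1)) := by
      conv_lhs => rw [← C.sOp_q f hl]
      rw [hq_eq, hqq, hsq]
    have hgmeas : C.l (C.cod (C.ftMor f)) + C.l (C.dom (C.ftMor f)) < n := by
      rw [C.ftMor_cod, C.ftMor_dom, C.l_ft _ hl]; omega
    have hsg : C.sOp (C.qIter (C.ftMor f) X (i+1)) ∈ Bt :=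
      IH _ hgmeas (C.ftMor f) X (i+1) le_rfl hg hX (by omega) hiX1 hcodg
    have hdomQg : C.dom (C.qIter (C.ftMor f) X (i+1)) = C.starIter (C.ftMor f) X (i+1) :=
      C.dom_qIter (i+1) X (C.ftMor f) hiX1 hcodg
    have hftW : C.ft^[i] (C.starIter (C.ftMor f) X (i+1)) = C.star (C.cod f) (C.ftMor f) := by
      rw [C.ft_iter_starIter i (i+1) X (C.ftMor f) (by omega) hiX1 hcodg]
      have h11 : i + 1 - i = 1 := by omega
      rw [h11, C.starIter_succ, C.qIter_zero, hc]
    have hcodQa : C.cod (C.qIter (C.sOp f) (C.starIter (C.ftMor f) X (i+1)) i)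
        = C.starIter (C.ftMor f) X (i+1) := by
      apply C.cod_qIter i _ (C.sOp f)
      · rw [C.l_starIter (i+1) X (C.ftMor f) hiX1 hcodg]; omega
      · rw [hftW]; exact C.sOp_cod f hl
    rw [hkey]
    rw [C.sComp _ _ (by rw [hcodQa, hdomQg])
      (by rw [C.cod_qIter (i+1) X (C.ftMor f) hiX1 hcodg]; omega)]
    have hlQG : 0 < C.l (C.cod (C.qIter (C.ftMor f) X (i+1))) := by
      rw [C.cod_qIter (i+1) X (C.ftMor f) hiX1 hcodg]; omega
    have h5 := h.2.2.2.2.1 (C.sOp f) hs (C.sOp (C.qIter (C.ftMor f) X (i+1))) hsg (i+1)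
      (by omega)
      (by rw [Function.iterate_succ_apply, C.ft_cod_sOp _ hlQG, hdomQg, hftW,
            C.sOp_cod f hl])
    have he : C.sectStar (C.sOp f) (C.cod (C.sOp (C.qIter (C.ftMor f) X (i+1))))
          (C.sOp (C.qIter (C.ftMor f) X (i+1))) (i+1)
        = C.sOp (C.comp (C.qIter (C.sOp f) (C.starIter (C.ftMor f) X (i+1)) i)
            (C.sOp (C.qIter (C.ftMor f) X (i+1)))) := by
      unfold CSys.sectStar
      simp only [Nat.add_sub_cancel]
      rw [C.ft_cod_sOp _ hlQG, hdomQg]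
    rw [← he]
    exact h5

lemma partA (hBt : Bt ⊆ C.tOb) (h : C.Closed B Bt) (f : Mor) (X : Ob) (i : ℕ)
    (hf : MorIn C B Bt f) (hX : X ∈ B) (hi : i ≤ C.l X) (hc : C.cod f = C.ft^[i] X) :
    C.starIter f X i ∈ B := by
  cases i with
  | zero => exact MorIn.dom_mem hf h
  | succ n =>
    have hr := partB hBt h _ f X (n+1) le_rfl hf hX (by omega) hi hc
    have hlQ : 0 < C.l (C.cod (C.qIter f X (n+1))) := by
      rw [C.cod_qIter (n+1) X f hi hc]; omega
    have hft : C.ft (C.cod (C.sOp (C.qIter f X (n+1)))) = C.starIter f X (n+1) := by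
      rw [C.ft_cod_sOp _ hlQ, C.dom_qIter (n+1) X f hi hc]
    rw [← hft]
    exact h.2.1 _ (h.2.2.1 _ hr)

lemma partC (hBt : Bt ⊆ C.tOb) (h : C.Closed B Bt) :
    ∀ (i : ℕ) (X : Ob) (f : Mor), MorIn C B Bt f → X ∈ B → i ≤ C.l X →
      C.cod f = C.ft^[i] X → MorIn C B Bt (C.qIter f X i) := by
  intro i
  induction i with
  | zero => intro X f hf _ _ _; exact hf
  | succ n ih =>
    intro X f hf hX hi hc
    have hlX : 0 < C.l X := by omega
    have hlft := C.l_ft X hlX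
    have hc' : C.cod f = C.ft^[n] (C.ft X) := by
      rw [← Function.iterate_succ_apply]; exact hc
    have hv1 : MorIn C B Bt (C.qIter f (C.ft X) n) :=
      ih (C.ft X) f hf (h.2.1 X hX) (by omega) hc'
    have hcodv1 : C.cod (C.qIter f (C.ft X) n) = C.ft X :=
      C.cod_qIter n (C.ft X) f (by omega) hc'
    have hdomv1 : C.dom (C.qIter f (C.ft X) n) = C.starIter f (C.ft X) n :=
      C.dom_qIter n (C.ft X) f (by omega) hc'
    have hW : C.starIter f X (n+1) ∈ B := partA hBt h f X (n+1) hf hX hi hc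
    have hftW : C.ft (C.starIter f X (n+1)) = C.starIter f (C.ft X) n :=
      C.ft_starIter n X f hi hc
    rw [C.qIter_succ]
    apply MorIn.step
    · rw [C.q_cod X _ hlX hcodv1]; omega
    · rw [C.q_cod X _ hlX hcodv1]; exact hX
    · have hsq := C.square_comm X (C.qIter f (C.ft X) n) hlX hcodv1
      have hftm : C.ftMor (C.q X (C.qIter f (C.ft X) n))
          = C.comp (C.pIter (C.starIter f X (n+1)) 1) (C.qIter f (C.ft X) n) := by
        unfold CSys.ftMor
        rw [C.q_cod X _ hlX hcodv1, ← hsq, C.pIter_one, C.starIter_succ]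
      rw [hftm]
      exact TAIL hBt h hv1 1 (C.starIter f X (n+1)) hW
        (by rw [hdomv1, Function.iterate_one, hftW])
        (by rw [C.l_starIter (n+1) X f hi hc]; omega)
    · exact partB hBt h _ f X (n+1) le_rfl hf hX (by omega) hi hc

end MainAux
/-- Lemma 2009.10.16.l5: for `X ∈ B` with `l X > 0` and
`f : Y → ft X` in `Mor(CC')`, one has `f*X ∈ B` and `q(f,X) ∈ Mor(CC')`. -/
theorem stmt11 {Ob : Type u} {Mor : Type v} (C : CSys Ob Mor)
    (B : Set Ob) (Bt : Set Mor) (hBt : Bt ⊆ C.tOb) (h : C.Closed B Bt)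
    (X : Ob) (hX : X ∈ B) (hlX : 0 < C.l X)
    (f : Mor) (hf : MorIn C B Bt f) (hfc : C.cod f = C.ft X) :
    C.star X f ∈ B ∧ MorIn C B Bt (C.q X f) := by
  have h1 : C.cod f = C.ft^[1] X := by rwa [Function.iterate_one]
  have e1 : C.starIter f X 1 = C.star X f := by rw [C.starIter_succ, C.qIter_zero]
  have e2 : C.qIter f X 1 = C.q X f := by rw [C.qIter_succ, C.qIter_zero]
  constructor
  · rw [← e1]
    exact partA hBt h f X 1 hf hX (by omega) h1
  · rw [← e2]
    exact partC hBt h 1 X f hf hX (by omega) h1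
end
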